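/- arXiv:math/9808113 — 13 statements merged into one kernel-verified Lean document; each statement's English description precedes it below -/
import Mathlib

section
/- Let p : X → Y × ℝ be a continuous map and let X ∪_p Y denote the teardrop, i.e. the set X ⊔ Y with the minimal topology such that X ⊆ X ∪_p Y is an open embedding and the collapse map c : X ∪_p Y → Y × (-∞, +∞], defined by c(x) = p(x) for x ∈ X and c(y) = (y, +∞) for y ∈ Y, is continuous. Then a function f : Z → X ∪_p Y from a topological space Z is continuous if and only if (i) the restriction f : f⁻¹(X) → X is continuous, and (ii) the composition c ∘ f : Z → Y × (-∞, +∞] is continuous. -/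
open Topology Set

/-- The collapse map of the teardrop `X ∪_p Y`, landing in `Y × (-∞, +∞]`
(modelled as `Y × EReal`; the value `⊥` is never attained). -/
noncomputable def teardropCollapse {X Y : Type*} (p : X → Y × ℝ) : X ⊕ Y → Y × EReal
  | Sum.inl x => ((p x).1, ((p x).2 : EReal))
  | Sum.inr y => (y, ⊤)

/-- The teardrop topology on `X ⊔ Y`: the minimal topology such that
`X ⊆ X ∪_p Y` is an open embedding and the collapse map is continuous. -/
def teardropTop {X Y : Type*} [TopologicalSpace X] [TopologicalSpace Y]
    (p : X → Y × ℝ) : TopologicalSpace (X ⊕ Y) :=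
  TopologicalSpace.generateFrom
    ({S | ∃ U : Set X, IsOpen U ∧ S = Sum.inl '' U} ∪
     {S | ∃ V : Set (Y × EReal), IsOpen V ∧ S = teardropCollapse p ⁻¹' V})

/-!
The points of `X` are exactly those that the collapse map sends off `Y × {+∞}`, so for a map `f`
with `c ∘ f` continuous the set `f⁻¹(X)` is open in `Z`. The preimage of an open `U ⊆ X` is then
the image of an open subset of the open subspace `f⁻¹(X)`, hence open.
-/

section LeftRestriction

variable {α β γ : Type*}

def leftRestriction (f : γ → α ⊕ β) : {z // (f z).isLeft} → α :=
  fun z => (f z.1).getLeft z.2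

theorem preimage_inl_image_eq_image_leftRestriction (f : γ → α ⊕ β) (U : Set α) :
    f ⁻¹' (Sum.inl '' U) = Subtype.val '' (leftRestriction f ⁻¹' U) := by
  ext z
  constructor
  · rintro ⟨x, hx, hfz⟩
    have hz : (f z).isLeft := Sum.isLeft_iff.2 ⟨x, hfz.symm⟩
    refine ⟨⟨z, hz⟩, ?_, rfl⟩
    rwa [mem_preimage, leftRestriction, (Sum.getLeft_eq_iff hz).2 hfz.symm]
  · rintro ⟨⟨z, hz⟩, hU, rfl⟩
    exact ⟨_, hU, Sum.inl_getLeft _ hz⟩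

theorem preimage_leftRestriction_eq (f : γ → α ⊕ β) (U : Set α) :
    leftRestriction f ⁻¹' U = Subtype.val ⁻¹' (f ⁻¹' (Sum.inl '' U)) := by
  rw [preimage_inl_image_eq_image_leftRestriction, Subtype.val_injective.preimage_image]

end LeftRestriction

section Teardrop

variable {X Y : Type*} (p : X → Y × ℝ)

theorem teardropCollapse_preimage_snd_ne_top :
    teardropCollapse p ⁻¹' {q | q.2 ≠ ⊤} = {s | s.isLeft} := by
  ext (x | y) <;> simp [teardropCollapse]

variable [TopologicalSpace X] [TopologicalSpace Y]

theorem isOpen_teardrop_inl_image {U : Set X} (hU : IsOpen U) :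
    IsOpen[teardropTop p] (Sum.inl '' U) :=
  TopologicalSpace.isOpen_generateFrom_of_mem (Or.inl ⟨U, hU, rfl⟩)

theorem continuous_teardropCollapse : Continuous[teardropTop p, _] (teardropCollapse p) :=
  continuous_def.2 fun V hV => TopologicalSpace.isOpen_generateFrom_of_mem (Or.inr ⟨V, hV, rfl⟩)

end Teardrop

theorem continuity_criterion_for_teardrop_general
    {X Y Z : Type*} [TopologicalSpace X] [TopologicalSpace Y] [TopologicalSpace Z]
    (p : X → Y × ℝ) (f : Z → X ⊕ Y) :
    @Continuous Z (X ⊕ Y) _ (teardropTop p) f ↔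
      (Continuous fun z : {z : Z // (f z).isLeft} => (f z.1).getLeft z.2) ∧
        Continuous (teardropCollapse p ∘ f) := by
  let := teardropTop p
  change Continuous f ↔ Continuous (leftRestriction f) ∧ _
  constructor
  · intro hf
    refine ⟨continuous_def.2 fun U hU => ?_, (continuous_teardropCollapse p).comp hf⟩
    rw [preimage_leftRestriction_eq]
    exact ((isOpen_teardrop_inl_image p hU).preimage hf).preimage continuous_subtype_val
  · rintro ⟨hleft, hcollapse⟩
    refine continuous_generateFrom_iff.2 ?_
    rintro _ (⟨U, hU, rfl⟩ | ⟨V, hV, rfl⟩)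
    · have hdom : IsOpen ((teardropCollapse p ∘ f) ⁻¹' {q | q.2 ≠ ⊤}) :=
        (isOpen_ne_fun continuous_snd continuous_const).preimage hcollapse
      rw [preimage_comp, teardropCollapse_preimage_snd_ne_top] at hdom
      rw [preimage_inl_image_eq_image_leftRestriction]
      exact hdom.isOpenMap_subtype_val _ (hleft.isOpen_preimage _ hU)
    · exact hcollapse.isOpen_preimage _ hV

/-- Continuity criterion for maps into a teardrop (Lemma 3.4):
`f : Z → X ∪_p Y` is continuous iff its restriction `f⁻¹(X) → X` is continuous
and the composition `c ∘ f : Z → Y × (-∞, +∞]` is continuous. -/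
theorem continuity_criterion_for_teardrop
    {X Y Z : Type*} [TopologicalSpace X] [TopologicalSpace Y] [TopologicalSpace Z]
    (p : X → Y × ℝ) (hp : Continuous p) (f : Z → X ⊕ Y) :
    @Continuous Z (X ⊕ Y) _ (teardropTop p) f ↔
      (Continuous fun z : {z : Z // (f z).isLeft} => (f z.1).getLeft z.2) ∧
        Continuous (teardropCollapse p ∘ f) :=
  continuity_criterion_for_teardrop_general p f
end

section
/- Let p : X → Y × ℝ be a continuous map. Then the collapse map c : X ∪_p Y → Y × (-∞, +∞] of the teardrop is a closed mapping over Y × {+∞}, i.e. for each y ∈ Y and each closed subset K of X ∪_p Y with K ∩ c⁻¹(y, +∞) = ∅, the point (y, +∞) is not in the closure of c(K). -/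
open Topology Set

/-!
Every basic open set of the teardrop that contains a point `y ∈ Y` is the preimage under `c` of
an open neighbourhood of `(y, +∞)`, since the images of open subsets of `X` miss `Y`. Hence every
neighbourhood of `y` contains the preimage of a neighbourhood of `(y, +∞)`; applied to the
complement of `K`, this gives a neighbourhood of `(y, +∞)` disjoint from `c(K)`.
-/

open Filter

theorem notMem_closure_image_of_comap_nhds_le {α β : Type*} [TopologicalSpace α]
    [TopologicalSpace β] {f : α → β} {a : α} (h : comap f (𝓝 (f a)) ≤ 𝓝 a) {K : Set α}
    (hK : IsClosed K) (ha : a ∉ K) : f a ∉ closure (f '' K) := by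
  obtain ⟨V, hV, hVK⟩ := mem_comap.1 (h (hK.isOpen_compl.mem_nhds ha))
  rw [mem_closure_iff_nhds, not_forall]
  refine ⟨V, fun hV' ↦ ?_⟩
  obtain ⟨_, hzV, z, hzK, rfl⟩ := hV' hV
  exact hVK hzV hzK

theorem comap_teardropCollapse_nhds_top_le {X Y : Type*} [TopologicalSpace X]
    [TopologicalSpace Y] (p : X → Y × ℝ) (y : Y) :
    comap (teardropCollapse p) (𝓝 (y, ⊤)) ≤ @nhds _ (teardropTop p) (Sum.inr y) := by
  rw [teardropTop, TopologicalSpace.nhds_generateFrom (α := X ⊕ Y)]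
  refine le_iInf₂ fun S ⟨hyS, hS⟩ ↦ ?_
  rcases hS with ⟨U, -, rfl⟩ | ⟨V, hV, rfl⟩
  · simp at hyS
  · exact le_principal_iff.2 (preimage_mem_comap (hV.mem_nhds hyS))

theorem teardropCollapse_closed_over_top_general
    {X Y : Type*} [TopologicalSpace X] [TopologicalSpace Y]
    (p : X → Y × ℝ) (y : Y) (K : Set (X ⊕ Y))
    (hK : IsClosed[teardropTop p] K)
    (hdisj : ∀ z ∈ K, teardropCollapse p z ≠ (y, ⊤)) :
    ((y, ⊤) : Y × EReal) ∉ closure (teardropCollapse p '' K) :=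
  @notMem_closure_image_of_comap_nhds_le _ _ (teardropTop p) _ _ (Sum.inr y)
    (comap_teardropCollapse_nhds_top_le p y) K hK fun hy ↦ hdisj _ hy rfl

/-- Lemma 3.6: the collapse map `c : X ∪_p Y → Y × (-∞, +∞]` is a closed
mapping over `Y × {+∞}`: for each `y ∈ Y` and closed `K ⊆ X ∪_p Y` with
`K ∩ c⁻¹(y, +∞) = ∅`, the point `(y, +∞)` is not in the closure of `c(K)`. -/
theorem teardropCollapse_closed_over_top
    {X Y : Type*} [TopologicalSpace X] [TopologicalSpace Y]
    (p : X → Y × ℝ) (hp : Continuous p) (y : Y) (K : Set (X ⊕ Y))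
    (hK : IsClosed[teardropTop p] K)
    (hdisj : ∀ z ∈ K, teardropCollapse p z ≠ (y, ⊤)) :
    ((y, ⊤) : Y × EReal) ∉ closure (teardropCollapse p '' K) :=
  teardropCollapse_closed_over_top_general p y K hK hdisj
end

section
/- Let (X, Y) be a pair of topological spaces and f : X → Y × (-∞, +∞] a continuous map such that f(y) = (y, +∞) for each y ∈ Y and f(X \ Y) ⊆ Y × ℝ. Let p = f restricted to X \ Y, viewed as a map X \ Y → Y × ℝ. Then the identity map from X to the teardrop (X \ Y) ∪_p Y is a homeomorphism if and only if f is a closed mapping over Y × {+∞}. -/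
open Topology Set

/-- The teardrop topology on `X` associated to a pair `(X, Y)` with `Y ⊆ X`
and a map `f : X → Y × (-∞, +∞]` (modelled as `↥Y × EReal`): the minimal
topology making `X \ Y` (with its subspace topology) an open subspace and
making the collapse map `f` continuous. -/
def pairTeardropTop {X : Type*} [TopologicalSpace X] (Y : Set X)
    (f : X → ↥Y × EReal) : TopologicalSpace X :=
  TopologicalSpace.generateFrom
    ({S | ∃ W : Set X, IsOpen W ∧ S = W ∩ Yᶜ} ∪
     {S | ∃ V : Set (↥Y × EReal), IsOpen V ∧ S = f ⁻¹' V})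

/-- Proposition 3.7: given a pair `(X, Y)` and a map
`f : X → Y × (-∞, +∞]` with `f(y) = (y, +∞)` for `y ∈ Y` and
`f(X \ Y) ⊆ Y × ℝ`, the identity from `X` to the teardrop `(X \ Y) ∪_p Y`
(where `p = f|X\Y`) is a homeomorphism if and only if `f` is a closed
mapping over `Y × {+∞}`. -/
theorem pair_is_teardrop_iff_closed_over_top
    {X : Type*} [tX : TopologicalSpace X] (Y : Set X)
    (f : X → ↥Y × EReal) (hf : Continuous f)
    (hfY : ∀ y : ↥Y, f y = (y, ⊤))
    (hfc : ∀ x, x ∉ Y → ∃ r : ℝ, (f x).2 = (r : EReal)) :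
    pairTeardropTop Y f = tX ↔
      ∀ (y : ↥Y) (K : Set X), IsClosed K → (∀ x ∈ K, f x ≠ (y, ⊤)) →
        ((y, ⊤) : ↥Y × EReal) ∉ closure (f '' K) := by
  classical
  set g : Set (Set X) :=
    ({S | ∃ W : Set X, IsOpen W ∧ S = W ∩ Yᶜ} ∪
     {S | ∃ V : Set (↥Y × EReal), IsOpen V ∧ S = f ⁻¹' V}) with hg
  -- Yᶜ is open
  have hYc : Yᶜ = f ⁻¹' {p : ↥Y × EReal | p.2 ≠ ⊤} := by
    ext x
    constructor
    · intro hx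
      obtain ⟨r, hr⟩ := hfc x hx
      simp [hr]
    · intro hx hxY
      exact hx (by simpa using congrArg Prod.snd (hfY ⟨x, hxY⟩))
  have hYcOpen : IsOpen Yᶜ := by
    rw [hYc]
    have hopen : IsOpen {p : ↥Y × EReal | p.2 ≠ ⊤} :=
      isClosed_singleton.isOpen_compl.preimage continuous_snd
    exact hopen.preimage hf
  constructor
  · -- forward
    intro h y K hK hKy
    have htX : tX = TopologicalSpace.generateFrom g := h.symm
    have basis := TopologicalSpace.isTopologicalBasis_of_subbasis htX
    have hyKc : (y : X) ∈ Kᶜ := fun hyK => hKy _ hyK (hfY y)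
    obtain ⟨v, ⟨F, ⟨hFfin, hFsub⟩, rfl⟩, hyv, hvK⟩ :=
      basis.exists_subset_of_mem_open hyKc hK.isOpen_compl
    have hchoice : ∀ s ∈ F, ∃ V : Set (↥Y × EReal),
        IsOpen V ∧ ((y, ⊤) : ↥Y × EReal) ∈ V ∧ s = f ⁻¹' V := by
      intro s hs
      have hys : (y : X) ∈ s := hyv s hs
      rcases hFsub hs with ⟨W, hW, rfl⟩ | ⟨V, hV, rfl⟩
      · exact absurd hys.2 (not_not_intro y.2)
      · refine ⟨V, hV, ?_, rfl⟩
        have := hys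
        rwa [Set.mem_preimage, hfY y] at this
    choose! V hVopen hVmem hVeq using hchoice
    set W : Set (↥Y × EReal) := ⋂ s ∈ F, V s with hW
    have hWopen : IsOpen W := hFfin.isOpen_biInter (fun s hs => hVopen s hs)
    have hWmem : ((y, ⊤) : ↥Y × EReal) ∈ W := Set.mem_biInter (fun s hs => hVmem s hs)
    have hWsub : f ⁻¹' W ⊆ Kᶜ := by
      intro x hx
      apply hvK
      intro s hs
      rw [hVeq s hs]
      simp only [hW, Set.preimage_iInter, Set.mem_iInter, Set.mem_preimage] at hx ⊢
      exact hx s hs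
    rw [mem_closure_iff]
    push_neg
    refine ⟨W, hWopen, hWmem, ?_⟩
    rw [Set.eq_empty_iff_forall_notMem]
    rintro b ⟨hbW, x, hxK, rfl⟩
    exact hWsub hbW hxK
  · -- backward
    intro h
    refine le_antisymm ?_ (le_generateFrom ?_)
    · rw [TopologicalSpace.le_def]
      intro U hU
      change TopologicalSpace.GenerateOpen g U
      have hUnion : U = ⋃₀ {t | t ∈ g ∧ t ⊆ U} := by
        apply Set.Subset.antisymm
        · intro x hx
          by_cases hxY : x ∈ Y
          · set y : ↥Y := ⟨x, hxY⟩ with hy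
            have hK' : ∀ z ∈ Uᶜ, f z ≠ (y, ⊤) := by
              intro z hz hfz
              by_cases hzY : z ∈ Y
              · have : f z = (⟨z, hzY⟩, ⊤) := hfY ⟨z, hzY⟩
                rw [this] at hfz
                have : z = x := congrArg Subtype.val (congrArg Prod.fst hfz)
                exact hz (this ▸ hx)
              · obtain ⟨r, hr⟩ := hfc z hzY
                have : ((r : EReal)) = ⊤ := by rw [← hr, hfz]
                exact EReal.coe_ne_top r this
            have hcl := h y Uᶜ (isOpen_compl_iff.mp (by simpa using hU)) hK'
            rw [mem_closure_iff] at hcl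
            push_neg at hcl
            obtain ⟨V, hVopen, hVmem, hVdisj⟩ := hcl
            refine ⟨f ⁻¹' V, ⟨Or.inr ⟨V, hVopen, rfl⟩, ?_⟩, ?_⟩
            · intro z hz
              by_contra hzU
              exact Set.eq_empty_iff_forall_notMem.mp hVdisj (f z) ⟨hz, z, hzU, rfl⟩
            · show x ∈ f ⁻¹' V
              have : f x = (y, ⊤) := hfY y
              rw [Set.mem_preimage, this]
              exact hVmem
          · exact ⟨U ∩ Yᶜ, ⟨Or.inl ⟨U, hU, rfl⟩, Set.inter_subset_left⟩, hx, hxY⟩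
        · exact Set.sUnion_subset (fun t ht => ht.2)
      rw [hUnion]
      exact TopologicalSpace.GenerateOpen.sUnion _ (fun t ht => TopologicalSpace.GenerateOpen.basic t ht.1)
    · rintro s (⟨W, hW, rfl⟩ | ⟨V, hV, rfl⟩)
      · exact hW.inter hYcOpen
      · exact hV.preimage hf
end

section
/- Let (X, Y) be a pair of topological spaces such that X is Hausdorff and Y is locally compact. Suppose there exist a proper retraction r : X → Y and a continuous map φ : X → (-∞, +∞] with φ⁻¹(+∞) = Y. Then f = r × φ : X → Y × (-∞, +∞] is a closed mapping over Y × {+∞}; consequently (X, Y) is a teardrop. -/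
open Topology Set

/-- `(X, Y)` is a teardrop: there is a continuous map `p : X \ Y → Y × ℝ`
(equivalently, a collapse map `f` which is the identity on `Y` and real-valued
off `Y`) whose teardrop topology coincides with the topology of `X`. -/
def IsTeardropPair {X : Type*} [tX : TopologicalSpace X] (Y : Set X) : Prop :=
  ∃ f : X → ↥Y × EReal, Continuous f ∧
    (∀ y : ↥Y, f y = (y, ⊤)) ∧
    (∀ x, x ∉ Y → ∃ r : ℝ, (f x).2 = (r : EReal)) ∧
    pairTeardropTop Y f = tX

/-- Proposition 3.9: if `X` is Hausdorff, `Y` is locally compact, `r : X → Y`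
is a proper retraction and `φ : X → (-∞, +∞]` is continuous with
`φ⁻¹(+∞) = Y`, then `f = r × φ` is a closed mapping over `Y × {+∞}`;
consequently `(X, Y)` is a teardrop. -/
theorem proper_retraction_gives_teardrop
    {X : Type*} [tX : TopologicalSpace X] [T2Space X] (Y : Set X)
    [LocallyCompactSpace ↥Y]
    (r : X → ↥Y) (hr : Continuous r) (hretr : ∀ y : ↥Y, r y = y)
    (hproper : ∀ K : Set ↥Y, IsCompact K → IsCompact (r ⁻¹' K))
    (φ : X → EReal) (hφ : Continuous φ) (hφbot : ∀ x, φ x ≠ ⊥)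
    (hφtop : ∀ x, φ x = ⊤ ↔ x ∈ Y) :
    (∀ (y : ↥Y) (K : Set X), IsClosed K →
        (∀ x ∈ K, (r x, φ x) ≠ ((y, ⊤) : ↥Y × EReal)) →
        ((y, ⊤) : ↥Y × EReal) ∉ closure ((fun x => (r x, φ x)) '' K)) ∧
      IsTeardropPair Y := by
  set f : X → ↥Y × EReal := fun x => (r x, φ x) with hfdef
  have hfc : Continuous f := hr.prodMk hφ
  have hYclosed : IsClosed Y := by
    have : Y = φ ⁻¹' {⊤} := by ext x; simp [hφtop x]
    rw [this]; exact isClosed_singleton.preimage hφ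
  have main : ∀ (y : ↥Y) (K : Set X), IsClosed K →
      (∀ x ∈ K, f x ≠ (y, ⊤)) → (y, ⊤) ∉ closure (f '' K) := by
    intro y K hK hKne
    obtain ⟨C, hC_cpt, hC_mem⟩ := exists_compact_mem_nhds y
    have hC_int : (y : ↥Y) ∈ interior C := mem_interior_iff_mem_nhds.mpr hC_mem
    have hKc : IsCompact (K ∩ r ⁻¹' C) := (hproper C hC_cpt).inter_left hK
    have hfKcl : IsClosed (f '' (K ∩ r ⁻¹' C)) := (hKc.image hfc).isClosed
    have hnot : ((y, ⊤) : ↥Y × EReal) ∉ f '' (K ∩ r ⁻¹' C) := by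
      rintro ⟨x, ⟨hxK, _⟩, hx⟩; exact hKne x hxK hx
    set O : Set (↥Y × EReal) := (f '' (K ∩ r ⁻¹' C))ᶜ ∩ (interior C ×ˢ univ) with hO
    have hOopen : IsOpen O := (hfKcl.isOpen_compl).inter (isOpen_interior.prod isOpen_univ)
    have hyO : ((y, ⊤) : ↥Y × EReal) ∈ O := ⟨hnot, hC_int, mem_univ _⟩
    rw [mem_closure_iff]
    push_neg
    refine ⟨O, hOopen, hyO, ?_⟩
    rw [Set.eq_empty_iff_forall_notMem]
    rintro p ⟨⟨hp1, hp2, _⟩, x, hxK, rfl⟩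
    exact hp1 ⟨x, ⟨hxK, mem_preimage.mpr (interior_subset hp2)⟩, rfl⟩
  have hfy : ∀ y : ↥Y, f y = (y, ⊤) := by
    intro y
    have h2 : φ y = ⊤ := (hφtop y).mpr y.2
    simp [hfdef, hretr y, h2]
  refine ⟨main, f, hfc, hfy, ?_, ?_⟩
  · intro x hx
    have h1 : φ x ≠ ⊤ := fun h => hx ((hφtop x).mp h)
    exact ⟨(φ x).toReal, (EReal.coe_toReal h1 (hφbot x)).symm⟩
  · -- topology equality
    set S : Set (Set X) :=
      ({S | ∃ W : Set X, IsOpen W ∧ S = W ∩ Yᶜ} ∪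
       {S | ∃ V : Set (↥Y × EReal), IsOpen V ∧ S = f ⁻¹' V}) with hS
    refine le_antisymm ?_ (le_generateFrom ?_)
    · -- generated topology is finer: every tX-open set is generated-open
      intro U hU
      have hU' : IsOpen U := hU
      have key : ∀ x ∈ U, ∃ N, TopologicalSpace.GenerateOpen S N ∧ x ∈ N ∧ N ⊆ U := by
        intro x hx
        by_cases hxY : x ∈ Y
        · -- use the closedness result
          have hclosed : IsClosed Uᶜ := hU'.isClosed_compl
          have hne : ∀ z ∈ Uᶜ, f z ≠ ((⟨x, hxY⟩ : ↥Y), (⊤ : EReal)) := by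
            intro z hz hfz
            have hzY : z ∈ Y := (hφtop z).mp (congrArg Prod.snd hfz)
            have : f z = ((⟨z, hzY⟩ : ↥Y), (⊤ : EReal)) := hfy ⟨z, hzY⟩
            rw [this] at hfz
            have : z = x := congrArg (Subtype.val ∘ Prod.fst) hfz
            exact hz (this ▸ hx)
          have := main ⟨x, hxY⟩ Uᶜ hclosed hne
          rw [mem_closure_iff] at this
          push_neg at this
          obtain ⟨V, hVopen, hVmem, hVemp⟩ := this
          refine ⟨f ⁻¹' V, .basic _ (Or.inr ⟨V, hVopen, rfl⟩), ?_, ?_⟩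
          · show f x ∈ V
            have : f x = ((⟨x, hxY⟩ : ↥Y), (⊤ : EReal)) := hfy ⟨x, hxY⟩
            rw [this]; exact hVmem
          · intro z hz
            by_contra hzU
            have : f z ∈ V ∩ f '' Uᶜ := ⟨hz, z, hzU, rfl⟩
            rw [hVemp] at this
            exact this
        · exact ⟨U ∩ Yᶜ, .basic _ (Or.inl ⟨U, hU', rfl⟩), ⟨hx, hxY⟩, inter_subset_left⟩
      choose! N hN1 hN2 hN3 using key
      have hUeq : U = ⋃₀ {T | ∃ x ∈ U, T = N x} := by
        ext z
        constructor
        · intro hz; exact ⟨N z, ⟨z, hz, rfl⟩, hN2 z hz⟩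
        · rintro ⟨T, ⟨x, hx, rfl⟩, hzT⟩; exact hN3 x hx hzT
      rw [hUeq]
      exact .sUnion _ (by rintro T ⟨x, hx, rfl⟩; exact hN1 x hx)
    · -- every generator is tX-open
      rintro s (⟨W, hW, rfl⟩ | ⟨V, hV, rfl⟩)
      · exact hW.inter hYclosed.isOpen_compl
      · exact hV.preimage hfc
end

section
/- Let Y be a closed subset of a metrizable space X. Then (X, Y) is a teardrop if and only if there exists a metric d inducing the topology of X and a retraction r : X → Y such that whenever {xₙ} is a sequence in X with no convergent subsequence and d(xₙ, Y) → 0, the sequence {r(xₙ)} also has no convergent subsequence. -/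
open Topology Set Filter

/-- A sequence has no convergent subsequence ("`xₙ → ∞`"). -/
def NoConvSubseq {X : Type*} [TopologicalSpace X] (u : ℕ → X) : Prop :=
  ¬ ∃ (φ : ℕ → ℕ) (x : X), StrictMono φ ∧ Tendsto (u ∘ φ) atTop (𝓝 x)

/-!
Given a teardrop collapse map `f = (r, h)`, pull a metric back along `x ↦ (x, h x)`: then `h` is
`1`-Lipschitz and equals `⊤` on `Y`, so `d(xₙ, Y) → 0` forces `h xₙ → ⊤`, and a convergent
subsequence of `r xₙ` would make `f xₙ` converge to `f y`, i.e. `xₙ → y` in the teardrop topology.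
Conversely `f = (r, 1 / d(·, Y))` is a collapse map: the two topologies can only differ at points
`y ∈ Y`, and there a sequence with `f xₙ → f y` has `r xₙ → y` and `d(xₙ, Y) → 0`, so the
hypothesis on `r` forces `xₙ → y`.
-/

open Metric TopologicalSpace
open scoped ENNReal

section PairTeardropTop

variable {X : Type*} [tX : TopologicalSpace X] {Y : Set X} {f : X → ↥Y × EReal}

theorem continuous_pairTeardropTop : Continuous[pairTeardropTop Y f, _] f :=
  continuous_def.2 fun V hV => isOpen_generateFrom_of_mem (Or.inr ⟨V, hV, rfl⟩)

theorem isOpen_pairTeardropTop_inter_compl {W : Set X} (hW : IsOpen W) :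
    IsOpen[pairTeardropTop Y f] (W ∩ Yᶜ) :=
  isOpen_generateFrom_of_mem (Or.inl ⟨W, hW, rfl⟩)

theorem comap_nhds_le_nhds_pairTeardropTop {y : X} (hy : y ∈ Y) :
    comap f (𝓝 (f y)) ≤ @nhds X (pairTeardropTop Y f) y := by
  refine tendsto_id'.1 (tendsto_nhds_generateFrom_iff.2 ?_)
  rintro s (⟨W, -, rfl⟩ | ⟨V, hV, rfl⟩) hys
  · exact absurd hy hys.2
  · exact preimage_mem_comap (hV.mem_nhds hys)

/-- Off `Y` the teardrop topology agrees with the original one, so it is determined by the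
neighbourhoods of the points of `Y`. -/
theorem pairTeardropTop_eq_iff (hY : IsClosed Y) (hf : Continuous f) :
    pairTeardropTop Y f = tX ↔ ∀ y ∈ Y, comap f (𝓝 (f y)) ≤ 𝓝 y := by
  refine ⟨fun h y hy =>
    (comap_nhds_le_nhds_pairTeardropTop hy).trans_eq (by rw [h]), fun h => le_antisymm ?_ ?_⟩
  · refine (le_iff_nhds _ _).2 fun x => ?_
    by_cases hx : x ∈ Y
    · exact (@Continuous.tendsto _ _ (pairTeardropTop Y f) _ _ continuous_pairTeardropTop
        x).le_comap.trans (h x hx)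
    · refine (nhds_basis_opens x).ge_iff.2 fun U ⟨hxU, hU⟩ => ?_
      exact mem_of_superset (@IsOpen.mem_nhds X (pairTeardropTop Y f) _ _
        (isOpen_pairTeardropTop_inter_compl hU) ⟨hxU, hx⟩) inter_subset_left
  · refine le_generateFrom ?_
    rintro s (⟨W, hW, rfl⟩ | ⟨V, hV, rfl⟩)
    · exact hW.inter hY.isOpen_compl
    · exact hV.preimage hf

end PairTeardropTop

theorem exists_metricSpace_lipschitzWith_one {X Z : Type*} [tX : TopologicalSpace X]
    [MetrizableSpace X] [MetricSpace Z] {g : X → Z} (hg : Continuous g) :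
    ∃ m : MetricSpace X, m.toUniformSpace.toTopologicalSpace = tX ∧
      @LipschitzWith X Z m.toPseudoEMetricSpace _ 1 g := by
  let := metrizableSpaceMetric X
  have hdist (x y : X) : dist (g x) (g y) ≤ dist (x, g x) (y, g y) := by
    rw [Prod.dist_eq]
    exact le_max_right _ _
  let m : MetricSpace X := (isEmbedding_graph hg).comapMetricSpace _
  refine ⟨m, rfl, LipschitzWith.of_dist_le_mul fun x y => ?_⟩
  rw [NNReal.coe_one, one_mul]
  exact hdist x y

section Metric

variable {α β : Type*} [PseudoMetricSpace α] [PseudoMetricSpace β]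

theorem LipschitzWith.dist_le_infDist {g : α → β} (hg : LipschitzWith 1 g) {s : Set α}
    (hs : s.Nonempty) {c : β} (hc : ∀ y ∈ s, g y = c) (x : α) : dist (g x) c ≤ infDist x s :=
  (le_infDist hs).2 fun y hy => by simpa [hc y hy] using hg.dist_le_mul x y

theorem LipschitzWith.tendsto_of_tendsto_infDist {ι : Type*} {l : Filter ι} {g : α → β}
    (hg : LipschitzWith 1 g) {s : Set α} (hs : s.Nonempty) {c : β} (hc : ∀ y ∈ s, g y = c)
    {u : ι → α} (hu : Tendsto (fun n => infDist (u n) s) l (𝓝 0)) :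
    Tendsto (g ∘ u) l (𝓝 c) :=
  tendsto_iff_dist_tendsto_zero.2 <|
    squeeze_zero (fun _ => dist_nonneg) (fun n => hg.dist_le_infDist hs hc (u n)) hu

-- Inverting in `ℝ≥0∞` makes the height `⊤` exactly on `closure s`, with no junk value at `0`.
noncomputable def invInfEDist (s : Set α) (x : α) : EReal :=
  ((infEDist x s)⁻¹ : ℝ≥0∞)

theorem continuous_invInfEDist (s : Set α) : Continuous (invInfEDist s) :=
  continuous_coe_ennreal_ereal.comp (continuous_inv.comp continuous_infEDist)

theorem invInfEDist_eq_top_of_mem {s : Set α} {x : α} (hx : x ∈ s) : invInfEDist s x = ⊤ := by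
  simp [invInfEDist, infEDist_zero_of_mem hx]

theorem exists_invInfEDist_eq_coe {s : Set α} {x : α} (hx : x ∉ closure s) :
    ∃ t : ℝ, invInfEDist s x = t := by
  have hne : (infEDist x s)⁻¹ ≠ ∞ :=
    ENNReal.inv_ne_top.2 fun h => hx (mem_closure_iff_infEDist_zero.2 h)
  exact ⟨_, (EReal.coe_ennreal_toReal hne).symm⟩

theorem tendsto_infDist_of_tendsto_invInfEDist {ι : Type*} {l : Filter ι} {s : Set α}
    {u : ι → α} (hu : Tendsto (invInfEDist s ∘ u) l (𝓝 ⊤)) :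
    Tendsto (fun n => infDist (u n) s) l (𝓝 0) := by
  have hE : Tendsto (fun n => infEDist (u n) s) l (𝓝 0) := by
    rw [← tendsto_inv_iff, ENNReal.inv_zero, ← EReal.tendsto_coe_ennreal]
    exact hu
  have := (ENNReal.tendsto_toReal ENNReal.zero_ne_top).comp hE
  rwa [ENNReal.toReal_zero] at this

end Metric

/-- Otherwise a subsequence of `v` stays away from `y`; by `hseq` it has a convergent
subsequence, whose limit lies in `Y` and so is fixed by `r`. -/
theorem tendsto_of_tendsto_retraction {X : Type*} [MetricSpace X] {Y : Set X} (hY : IsClosed Y)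
    (hYne : Y.Nonempty) {r : X → X} (hr : Continuous r) (hrY : ∀ y ∈ Y, r y = y)
    (hseq : ∀ u : ℕ → X, NoConvSubseq u →
      Tendsto (fun n => infDist (u n) Y) atTop (𝓝 0) → NoConvSubseq (r ∘ u))
    {v : ℕ → X} {y : X} (hrv : Tendsto (r ∘ v) atTop (𝓝 y))
    (hv : Tendsto (fun n => infDist (v n) Y) atTop (𝓝 0)) :
    Tendsto v atTop (𝓝 y) := by
  refine tendsto_of_subseq_tendsto fun ns hns => ?_
  obtain ⟨φ, z, hφ, hz⟩ : ∃ φ z, StrictMono φ ∧ Tendsto ((v ∘ ns) ∘ φ) atTop (𝓝 z) :=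
    not_not.1 fun h => hseq _ h (hv.comp hns) ⟨id, y, strictMono_id, hrv.comp hns⟩
  have hzY : z ∈ Y := (hY.mem_iff_infDist_zero hYne).2 <|
    tendsto_nhds_unique (((continuous_infDist_pt Y).tendsto z).comp hz)
      (hv.comp (hns.comp hφ.tendsto_atTop))
  have hzy : z = y := hrY z hzY ▸
    tendsto_nhds_unique ((hr.tendsto z).comp hz) (hrv.comp (hns.comp hφ.tendsto_atTop))
  exact ⟨φ, hzy ▸ hz⟩

theorem IsTeardropPair.exists_metric_retraction {X : Type*} [tX : TopologicalSpace X]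
    [MetrizableSpace X] {Y : Set X} (hY : IsClosed Y) (h : IsTeardropPair Y) :
    ∃ m : MetricSpace X, m.toUniformSpace.toTopologicalSpace = tX ∧
      ∃ r : X → X, Continuous r ∧ (∀ x, r x ∈ Y) ∧ (∀ y ∈ Y, r y = y) ∧
        ∀ u : ℕ → X, NoConvSubseq u →
          Tendsto (fun n => @infDist X m.toPseudoMetricSpace (u n) Y) atTop (𝓝 0) →
          NoConvSubseq (r ∘ u) := by
  obtain ⟨f, hf, hfY, -, htop⟩ := h
  let : MetricSpace EReal := metrizableSpaceMetric EReal
  obtain ⟨m, rfl, hlip⟩ := exists_metricSpace_lipschitzWith_one (continuous_snd.comp hf)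
  refine ⟨m, rfl, fun x => (f x).1, continuous_subtype_val.comp (continuous_fst.comp hf),
    fun x => (f x).1.2, fun y hy => congrArg (fun p => (p.1 : X)) (hfY ⟨y, hy⟩), ?_⟩
  rintro u hu hd ⟨φ, x, hφ, hx⟩
  have hxY : x ∈ Y := hY.mem_of_tendsto hx (.of_forall fun n => (f _).1.2)
  have hheight : Tendsto (fun n => (f (u n)).2) atTop (𝓝 ⊤) :=
    hlip.tendsto_of_tendsto_infDist ⟨x, hxY⟩ (fun y hy => by simp [hfY ⟨y, hy⟩]) hd
  have hfu : Tendsto (f ∘ u ∘ φ) atTop (𝓝 (f x)) := by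
    rw [hfY ⟨x, hxY⟩, nhds_prod_eq]
    exact (tendsto_subtype_rng.2 hx).prodMk (hheight.comp hφ.tendsto_atTop)
  exact hu ⟨φ, x, hφ,
    (tendsto_comap_iff.2 hfu).mono_right ((pairTeardropTop_eq_iff hY hf).1 htop x hxY)⟩

theorem isTeardropPair_of_retraction {X : Type*} [MetricSpace X] {Y : Set X} (hY : IsClosed Y)
    {r : X → X} (hr : Continuous r) (hrX : ∀ x, r x ∈ Y) (hrY : ∀ y ∈ Y, r y = y)
    (hseq : ∀ u : ℕ → X, NoConvSubseq u →
      Tendsto (fun n => infDist (u n) Y) atTop (𝓝 0) → NoConvSubseq (r ∘ u)) :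
    IsTeardropPair Y := by
  let f : X → ↥Y × EReal := fun x => (⟨r x, hrX x⟩, invInfEDist Y x)
  have hf : Continuous f := (hr.subtype_mk hrX).prodMk (continuous_invInfEDist Y)
  have hfY (y : Y) : f y = (y, ⊤) := Prod.ext (Subtype.ext (hrY y y.2)) (invInfEDist_eq_top_of_mem y.2)
  refine ⟨f, hf, hfY, fun x hx => exists_invInfEDist_eq_coe (hY.closure_eq.symm ▸ hx),
    (pairTeardropTop_eq_iff hY hf).2 fun y hy => ?_⟩
  refine tendsto_id'.1 (tendsto_iff_seq_tendsto.2 fun v hv => ?_)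
  rw [tendsto_comap_iff, hfY ⟨y, hy⟩, nhds_prod_eq, tendsto_prod_iff'] at hv
  exact tendsto_of_tendsto_retraction hY ⟨y, hy⟩ hr hrY hseq (tendsto_subtype_rng.1 hv.1)
    (tendsto_infDist_of_tendsto_invInfEDist hv.2)

/-- Theorem 3.10: for `Y` a closed subset of a metrizable space `X`, the pair
`(X, Y)` is a teardrop iff there are a compatible metric `d` on `X` and a
retraction `r : X → Y` such that whenever `xₙ → ∞` and `d(xₙ, Y) → 0`,
also `r(xₙ) → ∞`. -/
theorem isTeardropPair_iff_metric_retraction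
    {X : Type*} [tX : TopologicalSpace X] [TopologicalSpace.MetrizableSpace X]
    (Y : Set X) (hY : IsClosed Y) :
    IsTeardropPair Y ↔
      ∃ m : MetricSpace X, m.toUniformSpace.toTopologicalSpace = tX ∧
        ∃ r : X → X, Continuous r ∧ (∀ x, r x ∈ Y) ∧ (∀ y ∈ Y, r y = y) ∧
          ∀ u : ℕ → X, NoConvSubseq u →
            Tendsto (fun n => @Metric.infDist X m.toPseudoMetricSpace (u n) Y)
              atTop (𝓝 0) →
            NoConvSubseq (r ∘ u) := by
  refine ⟨IsTeardropPair.exists_metric_retraction hY, ?_⟩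
  rintro ⟨m, rfl, r, hr, hrX, hrY, hseq⟩
  exact isTeardropPair_of_retraction hY hr hrX hrY hseq
end

section
/- If Y is a compact subset of a metric space X, then (X, Y) is a teardrop if and only if there exists a continuous retraction r : X → Y. -/
open Topology Set

/-- Key quantitative lemma: near a point `y ∈ Y ∩ U`, points whose retraction
is close to `y` and which are close to `Y` lie in `U`. -/
lemma teardrop_key {X : Type*} [MetricSpace X] {Y : Set X} (hY : IsCompact Y)
    {r : X → X} (hr : Continuous r) (hrid : ∀ y ∈ Y, r y = y)
    {U : Set X} (hU : IsOpen U) {y : X} (hyY : y ∈ Y) (hyU : y ∈ U) :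
    ∃ δ > 0, ∃ ε > 0, ∀ x, dist (r x) y < δ → Metric.infDist x Y < ε → x ∈ U := by
  obtain ⟨η, hη, hball⟩ := Metric.isOpen_iff.mp hU y hyU
  -- for every z, a radius of continuity
  have hcont : ∀ z : X, ∃ ρ > 0, ρ ≤ η / 4 ∧
      ∀ x, dist x z < ρ → dist (r x) (r z) < η / 4 := by
    intro z
    obtain ⟨ρ, hρ, hρ'⟩ := Metric.continuous_iff.mp hr z (η / 4) (by linarith)
    exact ⟨min ρ (η / 4), lt_min hρ (by linarith), min_le_right _ _,
      fun x hx => hρ' x (lt_of_lt_of_le hx (min_le_left _ _))⟩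
  choose ρ hρpos hρle hρ using hcont
  obtain ⟨t, htY, hcover⟩ := hY.elim_nhds_subcover (fun z => Metric.ball z (ρ z / 2))
    (fun z _ => Metric.ball_mem_nhds z (by linarith [hρpos z]))
  have hyt : ∃ i ∈ t, y ∈ Metric.ball i (ρ i / 2) := by
    simpa using hcover hyY
  obtain ⟨i₀, hi₀, _⟩ := hyt
  have htne : t.Nonempty := ⟨i₀, hi₀⟩
  set ε : ℝ := t.inf' htne (fun z => ρ z / 2) with hε
  have hεpos : 0 < ε := by
    rw [hε]
    apply Finset.lt_inf'_iff .. |>.2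
    intro z _
    linarith [hρpos z]
  refine ⟨η / 4, by linarith, ε, hεpos, fun x hx1 hx2 => ?_⟩
  obtain ⟨z, hzY, hzx⟩ := (Metric.infDist_lt_iff ⟨y, hyY⟩).mp hx2
  obtain ⟨i, hit, hzi⟩ : ∃ i ∈ t, z ∈ Metric.ball i (ρ i / 2) := by
    simpa using hcover hzY
  have hεi : ε ≤ ρ i / 2 := Finset.inf'_le _ hit
  have hxi : dist x i < ρ i := by
    have h1 : dist x i ≤ dist x z + dist z i := dist_triangle x z i
    have h2 : dist z i < ρ i / 2 := by simpa [Metric.mem_ball] using hzi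
    linarith
  have hrx : dist (r x) (r i) < η / 4 := hρ i x hxi
  have hri : r i = i := hrid i (htY i hit)
  rw [hri] at hrx
  apply hball
  have h3 : dist x y ≤ dist x i + dist i (r x) + dist (r x) y := by
    have := dist_triangle x (r x) y
    have := dist_triangle x i (r x)
    linarith
  have h4 : dist i (r x) = dist (r x) i := dist_comm _ _
  have := hρle i
  simp only [Metric.mem_ball]
  linarith
/-- Corollary 3.11: if `Y` is a compact subset of a metric space `X`, then
`(X, Y)` is a teardrop iff there exists a continuous retraction `r : X → Y`. -/
theorem isTeardropPair_iff_retraction_of_compact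
    {X : Type*} [MetricSpace X] (Y : Set X) (hY : IsCompact Y) :
    IsTeardropPair Y ↔
      ∃ r : X → X, Continuous r ∧ (∀ x, r x ∈ Y) ∧ ∀ y ∈ Y, r y = y := by
  constructor
  · rintro ⟨f, hf, hfY, -, -⟩
    refine ⟨fun x => ((f x).1 : X),
      continuous_subtype_val.comp (continuous_fst.comp hf),
      fun x => (f x).1.2, fun y hy => ?_⟩
    have := hfY ⟨y, hy⟩
    simp [this]
  · rintro ⟨r, hr, hrY, hrid⟩
    set g : X → EReal := fun x =>
      (((ENNReal.ofReal (Metric.infDist x Y))⁻¹ : ENNReal) : EReal) with hg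
    set f : X → ↥Y × EReal := fun x => (⟨r x, hrY x⟩, g x) with hfdef
    have hgcont : Continuous g :=
      continuous_coe_ennreal_ereal.comp
        (continuous_inv.comp
          (ENNReal.continuous_ofReal.comp (Metric.continuous_infDist_pt Y)))
    have hfc : Continuous f := Continuous.prodMk (hr.subtype_mk _) hgcont
    have hgY : ∀ y ∈ Y, g y = ⊤ := by
      intro y hy
      simp [hg, Metric.infDist_zero_of_mem hy]
    have hYclosed : IsClosed Y := hY.isClosed
    -- characterization of the second coordinate off Y
    refine ⟨f, hfc, ?_, ?_, ?_⟩
    · intro y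
      have h1 : r (y : X) = y := hrid y y.2
      refine Prod.ext ?_ ?_
      · exact Subtype.ext h1
      · exact hgY y y.2
    · intro x hx
      have hne : Y.Nonempty := ⟨r x, hrY x⟩
      have hd : 0 < Metric.infDist x Y :=
        (hYclosed.notMem_iff_infDist_pos hne).mp hx
      refine ⟨(Metric.infDist x Y)⁻¹, ?_⟩
      show g x = _
      rw [hg]
      simp only
      rw [← ENNReal.ofReal_inv_of_pos hd, EReal.coe_ennreal_ofReal,
        max_eq_left (by positivity)]
    · -- the topologies agree
      apply le_antisymm
      · -- generated topology is finer: every metric-open set is generated-open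
        intro U hU
        change IsOpen U at hU
        set gens : Set (Set X) :=
          ({S | ∃ W : Set X, IsOpen W ∧ S = W ∩ Yᶜ} ∪
           {S | ∃ V : Set (↥Y × EReal), IsOpen V ∧ S = f ⁻¹' V}) with hgens
        show TopologicalSpace.GenerateOpen gens U
        have key : ∀ x ∈ U, ∃ S, S ∈ gens ∧ x ∈ S ∧ S ⊆ U := by
          intro x hxU
          by_cases hxY : x ∈ Y
          · obtain ⟨δ, hδ, ε, hε, hkey⟩ :=
              teardrop_key hY hr hrid hU hxY hxU
            set V : Set (↥Y × EReal) :=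
              (Subtype.val ⁻¹' Metric.ball x δ) ×ˢ
                Set.Ioi (((ENNReal.ofReal ε)⁻¹ : ENNReal) : EReal) with hV
            have hVopen : IsOpen V :=
              ((Metric.isOpen_ball).preimage continuous_subtype_val).prod isOpen_Ioi
            refine ⟨f ⁻¹' V, Or.inr ⟨V, hVopen, rfl⟩, ?_, ?_⟩
            · constructor
              · simp [hfdef, Metric.mem_ball, hrid x hxY, hδ]
              · have : g x = ⊤ := hgY x hxY
                show (((ENNReal.ofReal ε)⁻¹ : ENNReal) : EReal) < (f x).2
                have h1 : ((ENNReal.ofReal ε)⁻¹ : ENNReal) < ⊤ :=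
                  ENNReal.inv_lt_top.2 (ENNReal.ofReal_pos.2 hε)
                have h2 : (((ENNReal.ofReal ε)⁻¹ : ENNReal) : EReal) <
                    ((⊤ : ENNReal) : EReal) :=
                  EReal.coe_ennreal_lt_coe_ennreal_iff.2 h1
                have h3 : (f x).2 = g x := rfl
                rw [h3, this, ← EReal.coe_ennreal_top]
                exact h2
            · intro z hz
              obtain ⟨hz1, hz2⟩ := hz
              have hd1 : dist (r z) x < δ := by
                simpa [hfdef, Metric.mem_ball] using hz1
              have hd2 : Metric.infDist z Y < ε := by
                have h2 : (((ENNReal.ofReal ε)⁻¹ : ENNReal) : EReal) < g z := hz2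
                rw [hg] at h2
                rw [EReal.coe_ennreal_lt_coe_ennreal_iff, ENNReal.inv_lt_inv] at h2
                exact (ENNReal.ofReal_lt_ofReal_iff hε).mp h2
              exact hkey z hd1 hd2
          · exact ⟨U ∩ Yᶜ, Or.inl ⟨U, hU, rfl⟩, ⟨hxU, hxY⟩,
              Set.inter_subset_left⟩
        have hUeq : U = ⋃₀ {S | S ∈ gens ∧ S ⊆ U} := by
          apply Set.Subset.antisymm
          · intro x hx
            obtain ⟨S, hS, hxS, hSU⟩ := key x hx
            exact ⟨S, ⟨hS, hSU⟩, hxS⟩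
          · rintro x ⟨S, ⟨-, hSU⟩, hxS⟩
            exact hSU hxS
        rw [hUeq]
        exact TopologicalSpace.GenerateOpen.sUnion _
          (fun S hS => TopologicalSpace.GenerateOpen.basic _ hS.1)
      · -- metric topology is finer than generated topology
        apply le_generateFrom
        rintro S (⟨W, hW, rfl⟩ | ⟨V, hV, rfl⟩)
        · exact hW.inter hYclosed.isOpen_compl
        · exact hV.preimage hfc
end

section
/- Let Y be a closed subset of a locally compact metric space X. Then (X, Y) is a teardrop if and only if there exists a continuous retraction r : X → Y. -/
open Topology Set

open ENNReal in
/-- Corollary 3.12: if `Y` is a closed subset of a locally compact metric space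
`X`, then
`(X, Y)` is a teardrop iff there exists a continuous retraction `r : X → Y`. -/
theorem isTeardropPair_iff_retraction_of_locallyCompact
    {X : Type*} [MetricSpace X] [LocallyCompactSpace X] (Y : Set X) (hY : IsClosed Y) :
    IsTeardropPair Y ↔
      ∃ r : X → X, Continuous r ∧ (∀ x, r x ∈ Y) ∧ ∀ y ∈ Y, r y = y := by
  constructor
  · rintro ⟨f, hf, hfy, -, -⟩
    refine ⟨fun x => ((f x).1 : X), by fun_prop, fun x => (f x).1.2, fun y hy => ?_⟩
    have h := hfy ⟨y, hy⟩
    simp only at h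
    simp [h]
  · rintro ⟨r, hr, hrY, hrid⟩
    set g : X → EReal := fun x => (((edist x (r x))⁻¹ : ℝ≥0∞) : EReal) with hg
    have hgcont : Continuous g := by
      exact continuous_coe_ennreal_ereal.comp ((continuous_id.edist hr).inv)
    set f : X → ↥Y × EReal := fun x => (⟨r x, hrY x⟩, g x) with hfdef
    have hfc : Continuous f := (hr.subtype_mk _).prodMk hgcont
    have hftop : ∀ y : ↥Y, f y = (y, ⊤) := by
      rintro ⟨y, hy⟩
      have : r y = y := hrid y hy
      simp [hfdef, hg, this, Subtype.ext_iff]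
    refine ⟨f, hfc, hftop, ?_, ?_⟩
    · intro x hx
      have hne : edist x (r x) ≠ 0 := by
        simp only [ne_eq, edist_eq_zero]
        intro h
        exact hx (h ▸ hrY x)
      refine ⟨((f x).2).toReal, (EReal.coe_toReal ?_ ?_).symm⟩
      · show ((((edist x (r x))⁻¹ : ℝ≥0∞)) : EReal) ≠ ⊤
        rw [Ne, EReal.coe_ennreal_eq_top_iff, ENNReal.inv_eq_top]
        exact hne
      · exact EReal.coe_ennreal_ne_bot _
    · refine le_antisymm ?_ (le_generateFrom ?_)
      · rw [TopologicalSpace.le_def]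
        intro U hU
        show TopologicalSpace.GenerateOpen _ U
        have key : ∀ x ∈ U, ∃ O : Set X,
            TopologicalSpace.GenerateOpen
              ({S | ∃ W : Set X, IsOpen W ∧ S = W ∩ Yᶜ} ∪
               {S | ∃ V : Set (↥Y × EReal), IsOpen V ∧ S = f ⁻¹' V}) O ∧ x ∈ O ∧ O ⊆ U := by
          intro x hxU
          by_cases hx : x ∈ Y
          · obtain ⟨ε, hε, hball⟩ := Metric.isOpen_iff.mp hU x hxU
            set V : Set (↥Y × EReal) :=
              (Subtype.val ⁻¹' Metric.ball x (ε/2)) ×ˢ Ioi (((ε/2)⁻¹ : ℝ) : EReal) with hV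
            have hVopen : IsOpen V :=
              ((Metric.isOpen_ball).preimage continuous_subtype_val).prod isOpen_Ioi
            refine ⟨f ⁻¹' V, .basic _ (Or.inr ⟨V, hVopen, rfl⟩), ?_, ?_⟩
            · constructor
              · show r x ∈ Metric.ball x (ε/2)
                simp [hrid x hx, hε]
              · show g x ∈ Ioi _
                have : r x = x := hrid x hx
                simp [hg, this, EReal.coe_lt_top]
            · intro x' hx'
              obtain ⟨h1, h2⟩ := hx'
              have h1' : dist (r x') x < ε/2 := h1
              have h2' : dist x' (r x') < ε/2 := by
                have hnn : (0:ℝ) ≤ (ε/2)⁻¹ := by positivity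
                have : (((ε/2)⁻¹ : ℝ) : EReal)
                    = ((ENNReal.ofReal (ε/2)⁻¹ : ℝ≥0∞) : EReal) := by
                  rw [EReal.coe_ennreal_ofReal, max_eq_left hnn]
                replace h2 : ((ENNReal.ofReal (ε/2)⁻¹ : ℝ≥0∞) : EReal)
                    < (((edist x' (r x'))⁻¹ : ℝ≥0∞) : EReal) := by
                  rw [← this]; exact h2
                rw [EReal.coe_ennreal_lt_coe_ennreal_iff] at h2
                have := ENNReal.lt_inv_iff_lt_inv.mp h2
                rw [ENNReal.ofReal_inv_of_pos (by positivity), inv_inv] at this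
                exact edist_lt_ofReal.mp this
              apply hball
              calc dist x' x ≤ dist x' (r x') + dist (r x') x := dist_triangle _ _ _
                _ < ε/2 + ε/2 := add_lt_add h2' h1'
                _ = ε := by ring
          · exact ⟨U ∩ Yᶜ, .basic _ (Or.inl ⟨U, hU, rfl⟩), ⟨hxU, hx⟩, inter_subset_left⟩
        choose O hOgen hxO hOU using key
        have hUeq : U = ⋃₀ (range fun x : U => O x x.2) := by
          apply subset_antisymm
          · intro x hx
            exact ⟨O x hx, ⟨⟨x, hx⟩, rfl⟩, hxO x hx⟩
          · rintro x ⟨t, ⟨⟨y, hy⟩, rfl⟩, hxt⟩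
            exact hOU y hy hxt
        rw [hUeq]
        exact .sUnion _ (by rintro t ⟨⟨y, hy⟩, rfl⟩; exact hOgen y hy)
      · rintro S (⟨W, hW, rfl⟩ | ⟨V, hV, rfl⟩)
        · exact hW.inter hY.isOpen_compl
        · exact hV.preimage hfc
end

section
/- Let X and Y be disjoint Hausdorff spaces, p : X → Y × [0, +∞) a continuous map, and f : X → Y the composition of p with the projection to Y. Let X ⊕ Y denote Whyburn's unified space: the set X ⊔ Y topologized so that V is open iff V ∩ X and V ∩ Y are open and for every compact K ⊆ V ∩ Y, the set f⁻¹(K) ∩ (X \ V) is compact. Then the identity map from X ⊕ Y to the teardrop X ∪_p Y is continuous if and only if p is proper. -/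
open Topology Set

/-- Whyburn's openness condition for the unified space `X ⊕ Y` attached to
`f : X → Y`: `V` is open iff `V ∩ X` and `V ∩ Y` are open and for every
compact `K ⊆ V ∩ Y`, the set `f⁻¹(K) ∩ (X \ V)` is compact. -/
def WhyburnOpen {X Y : Type*} [TopologicalSpace X] [TopologicalSpace Y]
    (f : X → Y) (V : Set (X ⊕ Y)) : Prop :=
  IsOpen (Sum.inl ⁻¹' V) ∧ IsOpen (Sum.inr ⁻¹' V) ∧
    ∀ K : Set Y, K ⊆ Sum.inr ⁻¹' V → IsCompact K →
      IsCompact (f ⁻¹' K ∩ (Sum.inl ⁻¹' V)ᶜ)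


/-!
For `V ⊆ X ⊕ Y` and `K ⊆ Y`, call `f⁻¹(K) \ V` the bad set of `V` over `K`. Whyburn-open sets
form a topology, so it suffices to test the generators of the teardrop topology. The only
interesting ones are `c⁻¹(V)` with `V ⊆ Y × EReal` open: if `K × {⊤} ⊆ V` with `K` compact, the
tube lemma gives `u × (M, ⊤] ⊆ V` with `u` an open neighbourhood of `K`, which confines the bad
set of `c⁻¹(V)` over `K` to `p⁻¹(K × [0, M])`, compact when `p` is proper. Conversely, for
compact `K ⊆ Y × ℝ` with heights bounded by `M`, the teardrop-open set `c⁻¹(Y × (M, ⊤])`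
contains all of `Y`, and its bad set over `proj_Y(K)` is a compact set containing the closed
set `p⁻¹(K)`.
-/

section WhyburnTopology

variable {X Y : Type*} [TopologicalSpace X] [TopologicalSpace Y] {f : X → Y}

theorem whyburnOpen_univ (f : X → Y) : WhyburnOpen f univ := by
  refine ⟨isOpen_univ, isOpen_univ, fun K _ _ => ?_⟩
  simp only [preimage_univ, compl_univ, inter_empty, isCompact_empty]

theorem WhyburnOpen.inter {S T : Set (X ⊕ Y)} (hS : WhyburnOpen f S) (hT : WhyburnOpen f T) :
    WhyburnOpen f (S ∩ T) := by
  refine ⟨hS.1.inter hT.1, hS.2.1.inter hT.2.1, fun K hKST hK => ?_⟩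
  rw [preimage_inter, compl_inter, inter_union_distrib_left]
  exact (hS.2.2 K (fun y hy => (hKST hy).1) hK).union (hT.2.2 K (fun y hy => (hKST hy).2) hK)

theorem whyburnOpen_inl_image (f : X → Y) {U : Set X} (hU : IsOpen U) :
    WhyburnOpen f (Sum.inl '' U) := by
  have hY : (Sum.inr ⁻¹' (Sum.inl '' U) : Set Y) = ∅ := by ext; simp
  refine ⟨by rwa [preimage_image_eq _ Sum.inl_injective], hY ▸ isOpen_empty, fun K hK _ => ?_⟩
  rw [hY, subset_empty_iff] at hK
  simp [hK]

/-- A compact `K ⊆ ⋃ T` splits into finitely many compacts `L s ⊆ s`; the bad set of `⋃ T` over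
`K` is then the union of the bad sets of the `s` over `L s`, cut down to the closed set
`X \ ⋃ T`. -/
theorem whyburnOpen_sUnion [T2Space Y] {T : Set (Set (X ⊕ Y))} (hT : ∀ s ∈ T, WhyburnOpen f s) :
    WhyburnOpen f (⋃₀ T) := by
  have hXopen : IsOpen (Sum.inl ⁻¹' ⋃₀ T : Set X) := by
    rw [preimage_sUnion]; exact isOpen_biUnion fun s hs => (hT s hs).1
  refine ⟨hXopen, by rw [preimage_sUnion]; exact isOpen_biUnion fun s hs => (hT s hs).2.1,
    fun K hKT hK => ?_⟩
  obtain ⟨t, hKt⟩ := hK.elim_finite_subcover (fun s : T => Sum.inr ⁻¹' (s : Set (X ⊕ Y)))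
    (fun s => (hT s s.2).2.1) (by simpa [preimage_sUnion, iUnion_subtype] using hKT)
  obtain ⟨L, hLc, hLs, hKL⟩ :=
    hK.finite_compact_cover t _ (fun s _ => (hT s s.2).2.1) hKt
  have hC : IsCompact (⋃ s ∈ t, f ⁻¹' L s ∩ (Sum.inl ⁻¹' (s : Set (X ⊕ Y)))ᶜ) :=
    t.isCompact_biUnion fun s _ => (hT s s.2).2.2 (L s) (hLs s) (hLc s)
  convert hC.inter_right hXopen.isClosed_compl using 1
  ext x
  simp only [hKL, preimage_iUnion, mem_inter_iff, mem_iUnion, mem_compl_iff, mem_preimage,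
    mem_sUnion, not_exists, not_and]
  constructor
  · rintro ⟨⟨s, hs, hx⟩, hxT⟩
    exact ⟨⟨s, hs, hx, hxT s s.2⟩, hxT⟩
  · rintro ⟨⟨s, hs, hx, -⟩, hxT⟩
    exact ⟨⟨s, hs, hx⟩, hxT⟩

variable (f) in
def whyburnTop [T2Space Y] : TopologicalSpace (X ⊕ Y) where
  IsOpen := WhyburnOpen f
  isOpen_univ := whyburnOpen_univ f
  isOpen_inter _ _ := WhyburnOpen.inter
  isOpen_sUnion _ := whyburnOpen_sUnion

end WhyburnTopology

section Teardrop

variable {X Y : Type*} [TopologicalSpace X] [TopologicalSpace Y] {p : X → Y × ℝ}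

theorem isOpen_teardropTop_collapse_preimage {V : Set (Y × EReal)} (hV : IsOpen V) :
    IsOpen[teardropTop p] (teardropCollapse p ⁻¹' V) :=
  .basic _ (.inr ⟨V, hV, rfl⟩)

theorem whyburnOpen_teardropCollapse_preimage (hp : Continuous p) (hnonneg : ∀ x, 0 ≤ (p x).2)
    (hproper : ∀ K : Set (Y × ℝ), IsCompact K → IsCompact (p ⁻¹' K))
    {V : Set (Y × EReal)} (hV : IsOpen V) :
    WhyburnOpen (fun x => (p x).1) (teardropCollapse p ⁻¹' V) := by
  have hXopen : IsOpen (Sum.inl ⁻¹' (teardropCollapse p ⁻¹' V) : Set X) :=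
    hV.preimage (hp.fst.prodMk (continuous_coe_real_ereal.comp hp.snd))
  refine ⟨hXopen, hV.preimage (continuous_id.prodMk continuous_const), fun K hKV hK => ?_⟩
  obtain ⟨u, v, -, hv, hKu, htop, huv⟩ :=
    generalized_tube_lemma hK isCompact_singleton hV (by rintro ⟨y, t⟩ ⟨hy, rfl⟩; exact hKV hy)
  obtain ⟨M, hMv⟩ := EReal.mem_nhds_top_iff.1 (hv.mem_nhds (htop rfl))
  convert (hproper (K ×ˢ Icc 0 M) (hK.prod isCompact_Icc)).inter_right hXopen.isClosed_compl using 1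
  ext x
  refine ⟨fun ⟨hxK, hxV⟩ => ⟨⟨hxK, hnonneg x, not_lt.1 fun hMx => hxV ?_⟩, hxV⟩,
    fun ⟨⟨hxK, _⟩, hxV⟩ => ⟨hxK, hxV⟩⟩
  exact huv ⟨hKu hxK, hMv (EReal.coe_lt_coe_iff.2 hMx)⟩

theorem whyburnTop_le_teardropTop [T2Space Y] (hp : Continuous p) (hnonneg : ∀ x, 0 ≤ (p x).2)
    (hproper : ∀ K : Set (Y × ℝ), IsCompact K → IsCompact (p ⁻¹' K)) :
    whyburnTop (fun x => (p x).1) ≤ teardropTop p := by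
  refine le_generateFrom ?_
  rintro _ (⟨U, hU, rfl⟩ | ⟨V, hV, rfl⟩)
  · exact whyburnOpen_inl_image _ hU
  · exact whyburnOpen_teardropCollapse_preimage hp hnonneg hproper hV

theorem isCompact_preimage_of_forall_teardrop_whyburnOpen [T2Space Y]
    (hp : Continuous p)
    (h : ∀ W : Set (X ⊕ Y), IsOpen[teardropTop p] W → WhyburnOpen (fun x => (p x).1) W)
    {K : Set (Y × ℝ)} (hK : IsCompact K) : IsCompact (p ⁻¹' K) := by
  obtain ⟨M, hM⟩ := (hK.image continuous_snd).bddAbove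
  have hW := h _ <| isOpen_teardropTop_collapse_preimage <|
    isOpen_univ.prod (isOpen_Ioi (a := (M : EReal)))
  have hbad := hW.2.2 (Prod.fst '' K) (fun y _ => ⟨trivial, EReal.coe_lt_top M⟩)
    (hK.image continuous_fst)
  refine hbad.of_isClosed_subset (hK.isClosed.preimage hp) fun x hx => ⟨⟨p x, hx, rfl⟩, ?_⟩
  rintro ⟨-, hMx⟩
  exact (EReal.coe_lt_coe_iff.1 hMx).not_ge (hM ⟨p x, hx, rfl⟩)

end Teardrop

theorem unified_to_teardrop_continuous_iff_proper_general
    {X Y : Type*} [TopologicalSpace X] [TopologicalSpace Y]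
    [T2Space Y]
    (p : X → Y × ℝ) (hp : Continuous p) (hnonneg : ∀ x, 0 ≤ (p x).2) :
    (∀ W : Set (X ⊕ Y), IsOpen[teardropTop p] W →
        WhyburnOpen (fun x => (p x).1) W) ↔
      ∀ K : Set (Y × ℝ), IsCompact K → IsCompact (p ⁻¹' K) :=
  ⟨fun h _ hK => isCompact_preimage_of_forall_teardrop_whyburnOpen hp h hK,
    fun hproper W hW => whyburnTop_le_teardropTop hp hnonneg hproper W hW⟩

/-- Proposition 3.16: for disjoint Hausdorff `X`, `Y` and continuous
`p : X → Y × [0, +∞)` with `f = proj_Y ∘ p`, the identity from Whyburn's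
unified space `X ⊕ Y` to the teardrop `X ∪_p Y` is continuous iff `p` is
proper. (Continuity of the identity means every teardrop-open set is open in
the unified space.) -/
theorem unified_to_teardrop_continuous_iff_proper
    {X Y : Type*} [TopologicalSpace X] [TopologicalSpace Y]
    [T2Space X] [T2Space Y]
    (p : X → Y × ℝ) (hp : Continuous p) (hnonneg : ∀ x, 0 ≤ (p x).2) :
    (∀ W : Set (X ⊕ Y), IsOpen[teardropTop p] W →
        WhyburnOpen (fun x => (p x).1) W) ↔
      ∀ K : Set (Y × ℝ), IsCompact K → IsCompact (p ⁻¹' K) :=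
  unified_to_teardrop_continuous_iff_proper_general p hp hnonneg
end

section
/- Let A be a subspace of a metric space X and let N be a neighborhood of A in X. Then the inclusion of homotopy links holink(N, A) → holink(X, A) is a fiber homotopy equivalence over A (with respect to the evaluation-at-0 maps). In particular, there is a fiberwise deformation R : holink(X, A) × I → holink(X, A) with R₀ = id, R₁(holink(X, A)) ⊆ holink(N, A), and R_t(holink(N, A)) ⊆ holink(N, A) for all t. -/
open Topology Set unitInterval

/-- The homotopy link of `A` in `X`: paths `ω : [0,1] → X` with `ω 0 ∈ A`
and `ω t ∉ A` for `t ≠ 0`, as a subset of `C([0,1], X)` with the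
compact-open topology. -/
def holink {X : Type*} [TopologicalSpace X] (A : Set X) :
    Set C(unitInterval, X) :=
  {ω | ω 0 ∈ A ∧ ∀ t : unitInterval, t ≠ 0 → ω t ∉ A}

/-- The homotopy link of `A` in the subspace `N ⊆ X`: paths of `holink`
taking all their values in `N`. -/
def holinkIn {X : Type*} [TopologicalSpace X] (N A : Set X) :
    Set C(unitInterval, X) :=
  {ω | (∀ t : unitInterval, ω t ∈ N) ∧ ω 0 ∈ A ∧
    ∀ t : unitInterval, t ≠ 0 → ω t ∉ A}

/-- Key construction: a fibrewise deformation of `holink A` into `holinkIn N A`. -/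
theorem holink_deformation {X : Type*} [MetricSpace X] (A N : Set X)
    (hN : ∀ a ∈ A, N ∈ 𝓝 a) :
    ∃ R : ↥(holink A) × unitInterval → ↥(holink A),
      Continuous R ∧
      (∀ (ω : ↥(holink A)) (t : unitInterval),
        ((R (ω, t)).1 : C(unitInterval, X)) 0 = (ω.1 : C(unitInterval, X)) 0) ∧
      (∀ ω, R (ω, 0) = ω) ∧
      (∀ ω, ((R (ω, 1)).1 : C(unitInterval, X)) ∈ holinkIn N A) ∧
      (∀ ω t, (ω.1 : C(unitInterval, X)) ∈ holinkIn N A →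
        ((R (ω, t)).1 : C(unitInterval, X)) ∈ holinkIn N A) := by
  classical
  -- Step 1: a continuous "safe radius" function
  obtain ⟨ε, hεc, hεpos, hεball⟩ : ∃ ε : X → ℝ, Continuous ε ∧ (∀ a ∈ A, 0 < ε a) ∧
      ∀ x y : X, dist y x < ε x → y ∈ N := by
    rcases Set.eq_empty_or_nonempty (interior N)ᶜ with h | h
    · refine ⟨fun _ => 1, continuous_const, fun _ _ => one_pos, fun x y _ =>
        interior_subset (show y ∈ interior N from ?_)⟩
      have : y ∉ (interior N)ᶜ := by simp [h]
      simpa using this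
    · refine ⟨fun x => Metric.infDist x (interior N)ᶜ, Metric.continuous_infDist_pt _,
        fun a ha => ?_, fun x y hxy => ?_⟩
      · refine ((isOpen_interior.isClosed_compl).notMem_iff_infDist_pos h).mp ?_
        simpa using mem_interior_iff_mem_nhds.2 (hN a ha)
      · by_contra hy
        have hy' : y ∈ (interior N)ᶜ := fun hmem => hy (interior_subset hmem)
        have := Metric.infDist_le_dist_of_mem (x := x) hy'
        rw [dist_comm] at this
        linarith
  have hA0 : ∀ ω : ↥(holink A), (ω.1 : C(unitInterval, X)) 0 ∈ A := fun ω => ω.2.1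
  have hεne : ∀ ω : ↥(holink A), 0 < ε ((ω.1 : C(unitInterval, X)) 0) :=
    fun ω => hεpos _ (hA0 ω)
  -- Step 2: the auxiliary function g and the stopping value
  set g : ↥(holink A) → unitInterval → ℝ := fun ω s =>
    (s : ℝ) + max 0 (1 - 2 * dist ((ω.1 : C(unitInterval, X)) s)
      ((ω.1 : C(unitInterval, X)) 0) / ε ((ω.1 : C(unitInterval, X)) 0)) with hgdef
  have h0c : Continuous fun ω : ↥(holink A) => (ω.1 : C(unitInterval, X)) 0 :=
    (continuous_eval_const 0).comp continuous_subtype_val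
  have hevalc : Continuous fun p : ↥(holink A) × unitInterval =>
      (p.1.1 : C(unitInterval, X)) p.2 :=
    continuous_eval.comp ((continuous_subtype_val.comp continuous_fst).prodMk continuous_snd)
  have hgc : Continuous ↿g := by
    refine Continuous.add (continuous_subtype_val.comp continuous_snd)
      (continuous_const.max (Continuous.sub continuous_const (Continuous.div
        (continuous_const.mul (hevalc.dist (h0c.comp continuous_fst)))
        (hεc.comp (h0c.comp continuous_fst)) fun p => (hεne p.1).ne')))
  set infv : ↥(holink A) → ℝ := fun ω => sInf (g ω '' Set.univ) with hinfdef
  have hinfc : Continuous infv := isCompact_univ.continuous_sInf hgc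
  have hbdd : ∀ ω : ↥(holink A), BddBelow (g ω '' Set.univ) := fun ω =>
    isCompact_univ.bddBelow_image (hgc.comp (Continuous.prodMk_right ω)).continuousOn
  have hle : ∀ (ω : ↥(holink A)) (u : unitInterval),
      ε ((ω.1 : C(unitInterval, X)) 0) / 2 ≤
        dist ((ω.1 : C(unitInterval, X)) u) ((ω.1 : C(unitInterval, X)) 0) →
      infv ω ≤ u := by
    intro ω u hd
    have hε := hεne ω
    have hmax : (1 : ℝ) - 2 * dist ((ω.1 : C(unitInterval, X)) u)
        ((ω.1 : C(unitInterval, X)) 0) / ε ((ω.1 : C(unitInterval, X)) 0) ≤ 0 := by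
      rw [sub_nonpos, le_div_iff₀ hε]
      linarith
    have : g ω u = (u : ℝ) := by
      simp only [hgdef, max_eq_left hmax, add_zero]
    calc infv ω ≤ g ω u := csInf_le (hbdd ω) ⟨u, Set.mem_univ u, rfl⟩
      _ = (u : ℝ) := this
  have hinfpos : ∀ ω : ↥(holink A), 0 < infv ω := by
    intro ω
    obtain ⟨s₀, -, hs₀⟩ := isCompact_univ.exists_isMinOn Set.univ_nonempty
      (hgc.comp (Continuous.prodMk_right ω)).continuousOn
    have hpos : 0 < g ω s₀ := by
      rcases eq_or_ne s₀ 0 with rfl | hne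
      · have : g ω 0 = 0 + max 0 1 := by
          simp [hgdef]
        rw [this]; norm_num
      · have h1 : (0 : ℝ) < (s₀ : ℝ) :=
          lt_of_le_of_ne s₀.2.1 fun h => hne (Subtype.ext h.symm)
        have h2 : (0 : ℝ) ≤ max 0 (1 - 2 * dist ((ω.1 : C(unitInterval, X)) s₀)
            ((ω.1 : C(unitInterval, X)) 0) / ε ((ω.1 : C(unitInterval, X)) 0)) :=
          le_max_left _ _
        simp only [hgdef]; linarith
    refine lt_of_lt_of_le hpos (le_csInf ⟨g ω 0, 0, Set.mem_univ _, rfl⟩ ?_)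
    rintro b ⟨s, -, rfl⟩
    exact isMinOn_iff.mp hs₀ s (Set.mem_univ s)
  -- Step 3: the stopping time τ
  set τ : ↥(holink A) → ℝ := fun ω => min 1 (infv ω) / 2 with hτdef
  have hτc : Continuous τ := (continuous_const.min hinfc).div_const 2
  have hτpos : ∀ ω, 0 < τ ω := fun ω => by
    have := hinfpos ω
    have : (0 : ℝ) < min 1 (infv ω) := lt_min one_pos this
    simp only [hτdef]; linarith
  have hτle1 : ∀ ω, τ ω ≤ 1 := fun ω => by
    have := min_le_left 1 (infv ω); simp only [hτdef]; linarith
  have hτlt : ∀ ω, τ ω < infv ω := fun ω => by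
    have h1 := min_le_right 1 (infv ω)
    have h2 := hinfpos ω
    simp only [hτdef]; linarith
  have hkey : ∀ (ω : ↥(holink A)) (u : unitInterval), (u : ℝ) ≤ τ ω →
      (ω.1 : C(unitInterval, X)) u ∈ N := by
    intro ω u hu
    have h1 : (u : ℝ) < infv ω := lt_of_le_of_lt hu (hτlt ω)
    have h2 : dist ((ω.1 : C(unitInterval, X)) u) ((ω.1 : C(unitInterval, X)) 0) <
        ε ((ω.1 : C(unitInterval, X)) 0) / 2 := by
      by_contra h
      push_neg at h
      exact absurd (hle ω u h) (not_le.mpr h1)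
    have := hεne ω
    exact hεball _ _ (by linarith)
  -- Step 4: the reparametrization scale sc
  set sc : ↥(holink A) × unitInterval → ℝ :=
    fun p => 1 - (p.2 : ℝ) + (p.2 : ℝ) * τ p.1 with hscdef
  have hscc : Continuous sc := by
    refine Continuous.add (continuous_const.sub (continuous_subtype_val.comp continuous_snd))
      ((continuous_subtype_val.comp continuous_snd).mul (hτc.comp continuous_fst))
  have hscpos : ∀ p, 0 < sc p := by
    rintro ⟨ω, t⟩
    have h1 := hτpos ω
    have h2 := hτle1 ω
    have h3 := t.2.1
    have h4 := t.2.2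
    simp only [hscdef]
    nlinarith
  have hscle : ∀ p, sc p ≤ 1 := by
    rintro ⟨ω, t⟩
    have h2 := hτle1 ω
    have h3 := t.2.1
    simp only [hscdef]
    nlinarith
  have hmemI : ∀ (p : ↥(holink A) × unitInterval) (s : unitInterval),
      (s : ℝ) * sc p ∈ unitInterval := by
    intro p s
    constructor
    · exact mul_nonneg s.2.1 (hscpos p).le
    · nlinarith [s.2.1, s.2.2, hscpos p, hscle p]
  -- Step 5: the deformation
  set m : (↥(holink A) × unitInterval) × unitInterval → X :=
    fun q => (q.1.1.1 : C(unitInterval, X)) ⟨(q.2 : ℝ) * sc q.1, hmemI q.1 q.2⟩ with hmdef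
  have hmc : Continuous m := by
    refine continuous_eval.comp (Continuous.prodMk
      (continuous_subtype_val.comp (continuous_fst.comp continuous_fst))
      (Continuous.subtype_mk
        ((continuous_subtype_val.comp continuous_snd).mul (hscc.comp continuous_fst)) _))
  set Rmap : C(↥(holink A) × unitInterval, C(unitInterval, X)) :=
    ContinuousMap.curry ⟨m, hmc⟩ with hRmapdef
  have hRval : ∀ (p : ↥(holink A) × unitInterval) (s : unitInterval),
      (Rmap p) s = (p.1.1 : C(unitInterval, X)) ⟨(s : ℝ) * sc p, hmemI p s⟩ := fun p s => rfl
  have hzeroeq : ∀ p : ↥(holink A) × unitInterval,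
      (⟨((0 : unitInterval) : ℝ) * sc p, hmemI p 0⟩ : unitInterval) = 0 := by
    intro p
    exact Subtype.ext (by simp)
  have hRmem : ∀ p : ↥(holink A) × unitInterval, (Rmap p : C(unitInterval, X)) ∈ holink A := by
    intro p
    constructor
    · rw [hRval p 0, hzeroeq p]
      exact p.1.2.1
    · intro s hs
      rw [hRval p s]
      apply p.1.2.2
      intro h
      apply hs
      have hcoe : (s : ℝ) * sc p = 0 := congrArg Subtype.val h
      have hsc := hscpos p
      have hs0 : (s : ℝ) = 0 := by
        rcases mul_eq_zero.mp hcoe with h' | h'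
        · exact h'
        · exact absurd h' hsc.ne'
      exact Subtype.ext hs0
  refine ⟨fun p => ⟨Rmap p, hRmem p⟩, ?_, ?_, ?_, ?_, ?_⟩
  · exact Continuous.subtype_mk Rmap.continuous _
  · intro ω t
    show (Rmap (ω, t)) 0 = _
    rw [hRval (ω, t) 0, hzeroeq (ω, t)]
  · intro ω
    apply Subtype.ext
    apply ContinuousMap.ext
    intro s
    show (Rmap (ω, 0)) s = _
    rw [hRval (ω, 0) s]
    congr 1
    apply Subtype.ext
    show (s : ℝ) * sc (ω, 0) = (s : ℝ)
    have : sc (ω, 0) = 1 := by simp [hscdef]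
    rw [this, mul_one]
  · intro ω
    have hsc1 : sc (ω, 1) = τ ω := by simp [hscdef]
    refine ⟨?_, ?_, ?_⟩
    · intro s
      show (Rmap (ω, 1)) s ∈ N
      rw [hRval (ω, 1) s]
      apply hkey
      show (s : ℝ) * sc (ω, 1) ≤ τ ω
      rw [hsc1]
      exact mul_le_of_le_one_left (hτpos ω).le s.2.2
    · exact (hRmem (ω, 1)).1
    · exact (hRmem (ω, 1)).2
  · intro ω t hω
    refine ⟨?_, (hRmem (ω, t)).1, (hRmem (ω, t)).2⟩
    intro s
    show (Rmap (ω, t)) s ∈ N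
    rw [hRval (ω, t) s]
    exact hω.1 _

/-- Proposition 5.2(i) (unparametrized case): for a neighborhood `N` of `A`
in a metric space `X`, the inclusion `holink(N, A) → holink(X, A)` is a
fibre homotopy equivalence over `A`; in particular there is a fibrewise
deformation `R` with `R₀ = id`, `R₁(holink(X,A)) ⊆ holink(N,A)` and
`R_t(holink(N,A)) ⊆ holink(N,A)` for all `t`. -/
theorem holink_inclusion_fibre_homotopy_equivalence
    {X : Type*} [MetricSpace X] (A N : Set X) (hN : ∀ a ∈ A, N ∈ 𝓝 a) :
    ∃ R : ↥(holink A) × unitInterval → ↥(holink A),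
      Continuous R ∧
      (∀ (ω : ↥(holink A)) (t : unitInterval),
        ((R (ω, t) : C(unitInterval, X))) 0 = (ω : C(unitInterval, X)) 0) ∧
      (∀ ω : ↥(holink A), R (ω, 0) = ω) ∧
      (∀ ω : ↥(holink A), ((R (ω, 1) : C(unitInterval, X))) ∈ holinkIn N A) ∧
      (∀ (ω : ↥(holink A)) (t : unitInterval),
        (ω : C(unitInterval, X)) ∈ holinkIn N A →
          ((R (ω, t) : C(unitInterval, X))) ∈ holinkIn N A) ∧
      -- the inclusion is a fibre homotopy equivalence: a fibre-preserving
      -- homotopy inverse `ψ` with fibrewise homotopies on both sides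
      ∃ ψ : ↥(holink A) → ↥(holinkIn N A),
        Continuous ψ ∧
        (∀ ω : ↥(holink A),
          ((ψ ω : C(unitInterval, X))) 0 = (ω : C(unitInterval, X)) 0) ∧
        (∃ G : ↥(holink A) × unitInterval → ↥(holink A),
          Continuous G ∧
          (∀ ω t, ((G (ω, t) : C(unitInterval, X))) 0 =
            (ω : C(unitInterval, X)) 0) ∧
          (∀ ω : ↥(holink A), G (ω, 0) =
            ⟨(ψ ω : C(unitInterval, X)), (ψ ω).2.2.1, (ψ ω).2.2.2⟩) ∧
          (∀ ω : ↥(holink A), G (ω, 1) = ω)) ∧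
        (∃ F : ↥(holinkIn N A) × unitInterval → ↥(holinkIn N A),
          Continuous F ∧
          (∀ ω t, ((F (ω, t) : C(unitInterval, X))) 0 =
            (ω : C(unitInterval, X)) 0) ∧
          (∀ ω : ↥(holinkIn N A), F (ω, 0) =
            ψ ⟨(ω : C(unitInterval, X)), ω.2.2.1, ω.2.2.2⟩) ∧
          (∀ ω : ↥(holinkIn N A), F (ω, 1) = ω)) := by
  obtain ⟨R, hRc, hR0ev, hRid, hR1, hRpres⟩ := holink_deformation A N hN
  have hι : Continuous fun ω : ↥(holinkIn N A) =>
      (⟨ω.1, ω.2.2.1, ω.2.2.2⟩ : ↥(holink A)) :=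
    Continuous.subtype_mk continuous_subtype_val _
  refine ⟨R, hRc, hR0ev, hRid, hR1, hRpres,
    fun ω => ⟨(R (ω, 1)).1, hR1 ω⟩, ?_, ?_, ?_, ?_⟩
  · exact Continuous.subtype_mk
      ((hRc.comp (continuous_id.prodMk continuous_const)).subtype_val) _
  · intro ω
    exact hR0ev ω 1
  · refine ⟨fun p => R (p.1, unitInterval.symm p.2), ?_, ?_, ?_, ?_⟩
    · exact hRc.comp (continuous_fst.prodMk (continuous_symm.comp continuous_snd))
    · intro ω t; exact hR0ev ω _
    · intro ω
      apply Subtype.ext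
      show (R (ω, unitInterval.symm 0)).1 = (R (ω, 1)).1
      rw [unitInterval.symm_zero]
    · intro ω
      show R (ω, unitInterval.symm 1) = ω
      rw [unitInterval.symm_one]
      exact hRid ω
  · refine ⟨fun p => ⟨(R (⟨p.1.1, p.1.2.2.1, p.1.2.2.2⟩, unitInterval.symm p.2)).1,
      hRpres _ _ p.1.2⟩, ?_, ?_, ?_, ?_⟩
    · refine Continuous.subtype_mk (Continuous.subtype_val (hRc.comp
        (Continuous.prodMk (hι.comp continuous_fst)
          (continuous_symm.comp continuous_snd)))) _
    · intro ω t
      exact hR0ev _ _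
    · intro ω
      apply Subtype.ext
      show (R (_, unitInterval.symm 0)).1 = _
      rw [unitInterval.symm_zero]
    · intro ω
      apply Subtype.ext
      show (R (_, unitInterval.symm 1)).1 = ω.1
      rw [unitInterval.symm_one, hRid]
end

section
/- Let F be a topological space (e.g. a closed manifold) and let h : F × ℝ → F × ℝ be a bounded homeomorphism (meaning there is c > 0 with |pr_ℝ(h(x,t)) - t| ≤ c for all (x,t)) such that h is the identity on F × (-∞, 0]. Then h is boundedly isotopic to the identity of F × ℝ: there is a homotopy H : (F × ℝ) × [0,1] → F × ℝ through homeomorphisms with H₀ = h, H₁ = id, and with a uniform bound on |pr_ℝ(H_s(x,t)) - t| independent of s. Explicitly, with θ_s(t) = t - s/(s-1) for 0 ≤ s < 1, the family H_s = (id_F × θ_s)⁻¹ ∘ h ∘ (id_F × θ_s) for s < 1, H₁ = id, is continuous and works. -/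
open Topology Set unitInterval

/-!
Conjugating `h` by the translation `t ↦ t + a` of the `ℝ`-factor gives a homeomorphism with the
same displacement bound which is the identity on `F × (-∞, a]`. Letting `a = s / (1 - s)` run
from `0` to `∞` as `s` runs through `[0, 1)`, these conjugates agree with the identity on larger
and larger half-spaces, so setting the time-`1` map to be the identity keeps the family continuous.
-/

section AlexanderTrick

variable {F : Type*} [TopologicalSpace F]

def translateSnd (a : ℝ) : F × ℝ ≃ₜ F × ℝ :=
  (Homeomorph.refl F).prodCongr (Homeomorph.addRight a)

def conjTranslate (h : F × ℝ ≃ₜ F × ℝ) (a : ℝ) : F × ℝ ≃ₜ F × ℝ :=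
  (translateSnd (-a)).trans (h.trans (translateSnd a))

variable (h : F × ℝ ≃ₜ F × ℝ)

theorem conjTranslate_apply (a : ℝ) (z : F × ℝ) :
    conjTranslate h a z = ((h (z.1, z.2 - a)).1, (h (z.1, z.2 - a)).2 + a) := by
  simp [conjTranslate, translateSnd, sub_eq_add_neg, Prod.map]

theorem abs_conjTranslate_snd_sub_le {c : ℝ} (hc : ∀ z, |(h z).2 - z.2| ≤ c) (a : ℝ)
    (z : F × ℝ) : |(conjTranslate h a z).2 - z.2| ≤ c := by
  have hshift : (conjTranslate h a z).2 - z.2 = (h (z.1, z.2 - a)).2 - (z.2 - a) := by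
    rw [conjTranslate_apply]; ring
  rw [hshift]
  exact hc (z.1, z.2 - a)

theorem conjTranslate_apply_of_snd_le (hid : ∀ (x : F) (t : ℝ), t ≤ 0 → h (x, t) = (x, t))
    {a : ℝ} {z : F × ℝ} (hz : z.2 ≤ a) : conjTranslate h a z = z := by
  rw [conjTranslate_apply, hid z.1 (z.2 - a) (by linarith)]
  simp

theorem continuous_conjTranslate_uncurry :
    Continuous fun p : (F × ℝ) × ℝ => conjTranslate h p.2 p.1 := by
  simp only [conjTranslate_apply]
  fun_prop

noncomputable def alexanderIsotopy (p : (F × ℝ) × I) : F × ℝ :=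
  if (p.2 : ℝ) = 1 then p.1 else conjTranslate h (p.2 / (1 - p.2)) p.1

theorem alexanderIsotopy_zero (z : F × ℝ) : alexanderIsotopy h (z, 0) = h z := by
  simp [alexanderIsotopy, conjTranslate_apply]

theorem alexanderIsotopy_one (z : F × ℝ) : alexanderIsotopy h (z, 1) = z := by
  simp [alexanderIsotopy]

theorem exists_homeomorph_alexanderIsotopy (s : I) :
    ∃ e : F × ℝ ≃ₜ F × ℝ, ∀ z, alexanderIsotopy h (z, s) = e z := by
  by_cases hs : (s : ℝ) = 1
  · exact ⟨Homeomorph.refl _, fun z => by simp [alexanderIsotopy, hs]⟩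
  · exact ⟨conjTranslate h (s / (1 - s)), fun z => by simp [alexanderIsotopy, hs]⟩

theorem abs_alexanderIsotopy_snd_sub_le {c : ℝ} (hc : 0 ≤ c)
    (hbdd : ∀ z, |(h z).2 - z.2| ≤ c) (z : F × ℝ) (s : I) :
    |(alexanderIsotopy h (z, s)).2 - z.2| ≤ c := by
  unfold alexanderIsotopy
  split_ifs
  · simpa using hc
  · exact abs_conjTranslate_snd_sub_le h hbdd _ z

variable {h}

/-- `z.2 * (1 - s) < s` says `z.2 < s / (1 - s)` for `s < 1`, but also holds at `s = 1`,
and it cuts out an open set. -/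
theorem alexanderIsotopy_eq_of_snd_mul_lt (hid : ∀ (x : F) (t : ℝ), t ≤ 0 → h (x, t) = (x, t))
    {z : F × ℝ} {s : I} (hzs : z.2 * (1 - s) < s) : alexanderIsotopy h (z, s) = z := by
  unfold alexanderIsotopy
  split_ifs with hs
  · rfl
  · have hpos : 0 < 1 - (s : ℝ) := sub_pos.2 (lt_of_le_of_ne s.2.2 hs)
    exact conjTranslate_apply_of_snd_le h hid ((le_div_iff₀ hpos).2 hzs.le)

theorem continuous_alexanderIsotopy (hid : ∀ (x : F) (t : ℝ), t ≤ 0 → h (x, t) = (x, t)) :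
    Continuous (alexanderIsotopy h) := by
  rw [continuous_iff_continuousAt]
  rintro ⟨z, s⟩
  by_cases hs : (s : ℝ) = 1
  · have hnear : ∀ᶠ p : (F × ℝ) × I in 𝓝 (z, s), p.1.2 * (1 - p.2) < p.2 :=
      (isOpen_lt (by fun_prop) (by fun_prop)).mem_nhds (by simp [hs])
    exact continuousAt_fst.congr
      (hnear.mono fun p hp => (alexanderIsotopy_eq_of_snd_mul_lt hid hp).symm)
  · have hnear : ∀ᶠ p : (F × ℝ) × I in 𝓝 (z, s), (p.2 : ℝ) ≠ 1 :=
      (isOpen_ne_fun (by fun_prop) continuous_const).mem_nhds hs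
    have hparam : ContinuousAt (fun p : (F × ℝ) × I => (p.2 : ℝ) / (1 - p.2)) (z, s) :=
      (continuous_subtype_val.comp continuous_snd).continuousAt.div (by fun_prop)
        (sub_ne_zero.2 (Ne.symm hs))
    have hconj : ContinuousAt (fun p : (F × ℝ) × I => conjTranslate h (p.2 / (1 - p.2)) p.1)
        (z, s) :=
      (continuous_conjTranslate_uncurry h).continuousAt.comp
        (f := fun p : (F × ℝ) × I => (p.1, (p.2 : ℝ) / (1 - p.2)))
        (continuousAt_fst.prodMk hparam)
    exact hconj.congr (hnear.mono fun p hp => by simp [alexanderIsotopy, hp])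

end AlexanderTrick

/-- Lemma 8.3 (Alexander trick): a bounded self-homeomorphism of `F × ℝ`
which is the identity on `F × (-∞, 0]` is boundedly isotopic to the
identity. -/
theorem bounded_homeo_identity_on_negatives_boundedly_isotopic_to_id
    {F : Type*} [TopologicalSpace F] (h : F × ℝ ≃ₜ F × ℝ)
    (hbdd : ∃ c : ℝ, 0 < c ∧ ∀ z : F × ℝ, |(h z).2 - z.2| ≤ c)
    (hid : ∀ (x : F) (t : ℝ), t ≤ 0 → h (x, t) = (x, t)) :
    ∃ H : (F × ℝ) × unitInterval → F × ℝ,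
      Continuous H ∧
      (∀ s : unitInterval, ∃ e : F × ℝ ≃ₜ F × ℝ, ∀ z, H (z, s) = e z) ∧
      (∀ z : F × ℝ, H (z, 0) = h z) ∧
      (∀ z : F × ℝ, H (z, 1) = z) ∧
      ∃ c : ℝ, ∀ (z : F × ℝ) (s : unitInterval), |(H (z, s)).2 - z.2| ≤ c := by
  obtain ⟨c, hc, hbc⟩ := hbdd
  exact ⟨alexanderIsotopy h, continuous_alexanderIsotopy hid,
    exists_homeomorph_alexanderIsotopy h, alexanderIsotopy_zero h, alexanderIsotopy_one h,
    c, abs_alexanderIsotopy_snd_sub_le h hc.le hbc⟩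
end

section
/- Suppose given groups (written additively) A, B, A', C', a set C, group homomorphisms σ₁ : A → B, ρ₁ : A' → B, σ₂ : B → C', and a surjective function β : B → C such that: (1) for b₁, b₂ ∈ B, β(b₁) = β(b₂) if and only if b₂ - b₁ = σ₁(a) for some a ∈ A; and (2) the sequence A' → B → C' (via ρ₁ and σ₂) is exact, i.e. image(ρ₁) = kernel(σ₂). Then for any b ∈ B: σ₂(b) lies in the image of σ₂ ∘ σ₁ if and only if β(b) lies in the image of β ∘ ρ₁. -/
open Set

/-- Lemma 8.7(i): given groups `A, B, A', C'`, a set `C`, homomorphisms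
`σ₁ : A → B`, `ρ₁ : A' → B`, `σ₂ : B → C'`, and a surjection `β : B → C`
whose point-inverses are the cosets of `im σ₁`, together with exactness of
`A' → B → C'`, one has for every `b ∈ B`:
`σ₂ b ∈ im (σ₂ ∘ σ₁)` iff `β b ∈ im (β ∘ ρ₁)`. -/
theorem exact_sequence_comparison
    {A B A' C' C : Type*} [AddGroup A] [AddGroup B] [AddGroup A'] [AddGroup C']
    (σ₁ : A →+ B) (ρ₁ : A' →+ B) (σ₂ : B →+ C') (β : B → C)
    (hβsurj : Function.Surjective β)
    (hβ : ∀ b₁ b₂ : B, β b₁ = β b₂ ↔ ∃ a : A, b₂ - b₁ = σ₁ a)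
    (hexact : ∀ b : B, σ₂ b = 0 ↔ ∃ a' : A', ρ₁ a' = b)
    (b : B) :
    (∃ a : A, σ₂ (σ₁ a) = σ₂ b) ↔ ∃ a' : A', β (ρ₁ a') = β b := by
  constructor
  · rintro ⟨a, ha⟩
    have h0 : σ₂ (-σ₁ a + b) = 0 := by simp [ha]
    obtain ⟨a', ha'⟩ := (hexact _).mp h0
    refine ⟨a', (hβ _ _).mpr ⟨a, ?_⟩⟩
    rw [ha']
    rw [sub_eq_iff_eq_add, add_neg_cancel_left]
  · rintro ⟨a', ha'⟩
    obtain ⟨a, ha⟩ := (hβ _ _).mp ha'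
    have h0 : σ₂ (ρ₁ a') = 0 := (hexact _).mpr ⟨a', rfl⟩
    refine ⟨a, ?_⟩
    have : b = σ₁ a + ρ₁ a' := sub_eq_iff_eq_add.mp ha
    simp [this, h0]
end

section
/- Suppose given groups A, B, A', C', abelian groups W, D, E, a set C, homomorphisms σ₁ : A → B, ρ₁ : A' → B, σ₂ : B → C', ρ₂ : D → C', σ₃ : C' → E, a surjective function β : B → C with β(b₁) = β(b₂) iff b₂ - b₁ ∈ image(σ₁), exactness image(ρ₁) = ker(σ₂) and image(ρ₂) = ker(σ₃), an injection τ : C → W, a B-module structure on W satisfying: σ₂(b₁) = σ₂(b₂) implies b₁·w = b₂·w for all w ∈ W; such that τβ : B → W is a crossed homomorphism (τβ(b₁+b₂) = b₁·τβ(b₂) + τβ(b₁)), τβ(-b) = -τβ(b), and N := τβρ₁ : A' → W is a homomorphism. Then there is a well-defined function β̃ : image(σ₂) → W/image(N) given by β̃(x) = [τβ(σ₂⁻¹(x))], and for b ∈ B: σ₃σ₂(b) ∈ image(σ₃σ₂σ₁) if and only if the class of τβ(b) in W/image(N) lies in β̃(image(σ₂) ∩ image(ρ₂)). -/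
/-!
Write `f = τ ∘ β`. Since the action of `B` on `W` factors through `σ₂`, every `k ∈ ker σ₂`
acts trivially, so the cocycle identity degenerates to `f (k + y) = f y + f k`; with
`ker σ₂ = im ρ₁` this gives the well-definedness of `β̃`. For the equivalence, the fibres of
`f` are exactly the cosets `im σ₁ + b`: if `σ₃σ₂ b = σ₃σ₂σ₁ a` then `y = -σ₁ a + b` has
`f y = f b` and `σ₃σ₂ y = 0`, so `σ₂ y ∈ im ρ₂`; conversely `f b = f y + N a' = f (ρ₁ a' + y)`
puts `b` in `im σ₁ + ρ₁ a' + y`, which `σ₃σ₂` maps into `σ₃σ₂(im σ₁)`.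
-/

section CrossedHom

variable {B C' W : Type*} [AddGroup B] [AddGroup C'] [AddCommGroup W]
  (μ : B → W → W) (f : B → W)

theorem crossed_map_zero (hcross : ∀ b₁ b₂, f (b₁ + b₂) = μ b₁ (f b₂) + f b₁)
    (hμzero : ∀ w, μ 0 w = w) : f 0 = 0 := by
  have h := hcross 0 0
  rwa [add_zero, hμzero, right_eq_add] at h

theorem crossed_add_of_map_eq_zero (σ : B →+ C')
    (hcross : ∀ b₁ b₂, f (b₁ + b₂) = μ b₁ (f b₂) + f b₁) (hμzero : ∀ w, μ 0 w = w)
    (hμcompat : ∀ b₁ b₂, σ b₁ = σ b₂ → ∀ w, μ b₁ w = μ b₂ w) {k : B} (hk : σ k = 0) (y : B) :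
    f (k + y) = f y + f k := by
  rw [hcross, hμcompat k 0 (by rw [hk, map_zero]), hμzero]

theorem crossed_sub_of_map_eq (σ : B →+ C')
    (hcross : ∀ b₁ b₂, f (b₁ + b₂) = μ b₁ (f b₂) + f b₁) (hμzero : ∀ w, μ 0 w = w)
    (hμcompat : ∀ b₁ b₂, σ b₁ = σ b₂ → ∀ w, μ b₁ w = μ b₂ w) {y₁ y₂ : B} (h : σ y₁ = σ y₂) :
    f y₁ - f y₂ = f (y₁ - y₂) := by
  have hk : σ (y₁ - y₂) = 0 := by rw [map_sub, h, sub_self]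
  have hsplit := crossed_add_of_map_eq_zero μ f σ hcross hμzero hμcompat hk y₂
  rw [sub_add_cancel] at hsplit
  rw [hsplit, add_sub_cancel_left]

end CrossedHom

section Fibres

variable {A B C' D E W : Type*} [AddGroup A] [AddGroup B] [AddGroup C'] [AddCommGroup D]
  [AddCommGroup E] (σ₁ : A →+ B) (σ₂ : B →+ C') (ρ₂ : D →+ C') (σ₃ : C' →+ E) (f : B → W)

theorem exists_eq_of_comp_mem_range (hf : ∀ b₁ b₂, f b₁ = f b₂ ↔ ∃ a, b₂ - b₁ = σ₁ a)
    (hex₂ : ∀ c, σ₃ c = 0 ↔ ∃ d, ρ₂ d = c) {b : B} {a : A}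
    (ha : σ₃ (σ₂ b) = σ₃ (σ₂ (σ₁ a))) :
    ∃ y, (∃ d, ρ₂ d = σ₂ y) ∧ f b = f y := by
  refine ⟨-σ₁ a + b, (hex₂ _).1 ?_, (hf _ _).2 ⟨-a, ?_⟩⟩
  · rw [map_add, map_add, map_neg, map_neg, ← ha, neg_add_cancel]
  · rw [add_sub_cancel_right, map_neg]

theorem comp_mem_range_of_eq {A' : Type*} [AddGroup A'] (ρ₁ : A' →+ B)
    (hf : ∀ b₁ b₂, f b₁ = f b₂ ↔ ∃ a, b₂ - b₁ = σ₁ a)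
    (hσ₂ρ₁ : ∀ a', σ₂ (ρ₁ a') = 0) (hσ₃ρ₂ : ∀ d, σ₃ (ρ₂ d) = 0)
    {b y : B} {a' : A'} {d : D} (hd : ρ₂ d = σ₂ y) (hb : f b = f (ρ₁ a' + y)) :
    ∃ a, σ₃ (σ₂ b) = σ₃ (σ₂ (σ₁ a)) := by
  obtain ⟨a, ha⟩ := (hf _ _).1 hb
  refine ⟨-a, ?_⟩
  rw [eq_neg_add_iff_add_eq.2 (sub_eq_iff_eq_add.1 ha).symm]
  simp only [map_add, map_neg, hσ₂ρ₁, ← hd, hσ₃ρ₂, zero_add, add_zero]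

end Fibres

theorem extended_exact_sequence_comparison_general
    {A B A' C' W D E C : Type*}
    [AddGroup A] [AddGroup B] [AddGroup A'] [AddGroup C']
    [AddCommGroup W] [AddCommGroup D] [AddCommGroup E]
    (σ₁ : A →+ B) (ρ₁ : A' →+ B) (σ₂ : B →+ C') (ρ₂ : D →+ C') (σ₃ : C' →+ E)
    (β : B → C) (τ : C → W) (μ : B → W → W)
    (hβ : ∀ b₁ b₂ : B, β b₁ = β b₂ ↔ ∃ a : A, b₂ - b₁ = σ₁ a)
    (hex₁ : ∀ b : B, σ₂ b = 0 ↔ ∃ a' : A', ρ₁ a' = b)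
    (hex₂ : ∀ c : C', σ₃ c = 0 ↔ ∃ d : D, ρ₂ d = c)
    (hτinj : Function.Injective τ)
    -- `μ` is a `B`-module structure on `W`:
    (hμzero : ∀ w : W, μ 0 w = w)
    -- condition (3): the action factors through `σ₂`
    (hμcompat : ∀ b₁ b₂ : B, σ₂ b₁ = σ₂ b₂ → ∀ w : W, μ b₁ w = μ b₂ w)
    -- condition (4): `τβ` is a crossed homomorphism
    (hcross : ∀ b₁ b₂ : B, τ (β (b₁ + b₂)) = μ b₁ (τ (β b₂)) + τ (β b₁)) :
    (∀ y₁ y₂ : B, σ₂ y₁ = σ₂ y₂ →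
        ∃ a' : A', τ (β y₁) - τ (β y₂) = τ (β (ρ₁ a'))) ∧
      ∀ b : B,
        (∃ a : A, σ₃ (σ₂ b) = σ₃ (σ₂ (σ₁ a))) ↔
          ∃ y : B, (∃ d : D, ρ₂ d = σ₂ y) ∧
            ∃ a' : A', τ (β b) - τ (β y) = τ (β (ρ₁ a')) := by
  set f : B → W := fun b => τ (β b)
  have hf : ∀ b₁ b₂, f b₁ = f b₂ ↔ ∃ a, b₂ - b₁ = σ₁ a :=
    fun b₁ b₂ => hτinj.eq_iff.trans (hβ b₁ b₂)
  have hσ₂ρ₁ : ∀ a', σ₂ (ρ₁ a') = 0 := fun a' => (hex₁ _).2 ⟨a', rfl⟩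
  refine ⟨fun y₁ y₂ h => ?_, fun b => ⟨?_, ?_⟩⟩
  · obtain ⟨a', ha'⟩ := (hex₁ (y₁ - y₂)).1 (by rw [map_sub, h, sub_self])
    exact ⟨a', (crossed_sub_of_map_eq μ f σ₂ hcross hμzero hμcompat h).trans (by rw [ha'])⟩
  · rintro ⟨a, ha⟩
    obtain ⟨y, hy, hfy⟩ := exists_eq_of_comp_mem_range σ₁ σ₂ ρ₂ σ₃ f hf hex₂ ha
    have hN0 : f (ρ₁ 0) = 0 := by rw [map_zero]; exact crossed_map_zero μ f hcross hμzero
    exact ⟨y, hy, 0, (sub_eq_zero.2 hfy).trans hN0.symm⟩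
  · rintro ⟨y, ⟨d, hd⟩, a', ha'⟩
    refine comp_mem_range_of_eq σ₁ σ₂ ρ₂ σ₃ f ρ₁ (a' := a') hf hσ₂ρ₁ (fun d => (hex₂ _).2 ⟨d, rfl⟩) hd ?_
    exact (sub_eq_iff_eq_add'.1 ha').trans
      (crossed_add_of_map_eq_zero μ f σ₂ hcross hμzero hμcompat (hσ₂ρ₁ a') y).symm

/-- Lemma 8.7(ii): the extended algebraic comparison lemma.  The conclusion
consists of (a) well-definedness of the induced function
`β̃ : im σ₂ → W / im N`, expressed as: if `σ₂ y₁ = σ₂ y₂` then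
`τβ(y₁) - τβ(y₂) ∈ im N`; and (b) for every `b ∈ B`,
`σ₃σ₂(b) ∈ im (σ₃σ₂σ₁)` iff the class of `τβ(b)` in `W / im N` lies in
`β̃(im σ₂ ∩ im ρ₂)`, i.e. iff there is `y ∈ B` with `σ₂ y ∈ im ρ₂` and
`τβ(b) - τβ(y) ∈ im N`. -/
theorem extended_exact_sequence_comparison
    {A B A' C' W D E C : Type*}
    [AddGroup A] [AddGroup B] [AddGroup A'] [AddGroup C']
    [AddCommGroup W] [AddCommGroup D] [AddCommGroup E]
    (σ₁ : A →+ B) (ρ₁ : A' →+ B) (σ₂ : B →+ C') (ρ₂ : D →+ C') (σ₃ : C' →+ E)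
    (β : B → C) (τ : C → W) (μ : B → W → W)
    (hβsurj : Function.Surjective β)
    (hβ : ∀ b₁ b₂ : B, β b₁ = β b₂ ↔ ∃ a : A, b₂ - b₁ = σ₁ a)
    (hex₁ : ∀ b : B, σ₂ b = 0 ↔ ∃ a' : A', ρ₁ a' = b)
    (hex₂ : ∀ c : C', σ₃ c = 0 ↔ ∃ d : D, ρ₂ d = c)
    (hτinj : Function.Injective τ)
    -- `μ` is a `B`-module structure on `W`:
    (hμzero : ∀ w : W, μ 0 w = w)
    (hμadd : ∀ (b₁ b₂ : B) (w : W), μ (b₁ + b₂) w = μ b₁ (μ b₂ w))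
    (hμlin : ∀ (b : B) (w w' : W), μ b (w + w') = μ b w + μ b w')
    -- condition (3): the action factors through `σ₂`
    (hμcompat : ∀ b₁ b₂ : B, σ₂ b₁ = σ₂ b₂ → ∀ w : W, μ b₁ w = μ b₂ w)
    -- condition (4): `τβ` is a crossed homomorphism
    (hcross : ∀ b₁ b₂ : B, τ (β (b₁ + b₂)) = μ b₁ (τ (β b₂)) + τ (β b₁))
    -- condition (5)
    (hneg : ∀ b : B, τ (β (-b)) = - τ (β b))
    -- condition (6): `N = τβρ₁` is a homomorphism
    (hNhom : ∀ a₁ a₂ : A',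
      τ (β (ρ₁ (a₁ + a₂))) = τ (β (ρ₁ a₁)) + τ (β (ρ₁ a₂))) :
    (∀ y₁ y₂ : B, σ₂ y₁ = σ₂ y₂ →
        ∃ a' : A', τ (β y₁) - τ (β y₂) = τ (β (ρ₁ a'))) ∧
      ∀ b : B,
        (∃ a : A, σ₃ (σ₂ b) = σ₃ (σ₂ (σ₁ a))) ↔
          ∃ y : B, (∃ d : D, ρ₂ d = σ₂ y) ∧
            ∃ a' : A', τ (β b) - τ (β y) = τ (β (ρ₁ a')) :=
  extended_exact_sequence_comparison_general σ₁ ρ₁ σ₂ ρ₂ σ₃ β τ μ hβ hex₁ hex₂ hτinj hμzero hμcompat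
    hcross
end

section
/- Let H be an Hadamard manifold (complete, simply connected Riemannian manifold of nonpositive sectional curvature) of dimension n with distance function d, fix x₀ ∈ H, and let S be the unit tangent sphere at x₀. Define p : H \ {x₀} → S × (0, +∞) by p(x) = (γ'_x(0), d(x₀, x)), where γ_x is the unique unit-speed geodesic from x₀ through x. Then p is continuous, and the teardrop H ∪_p S (with S replacing the role of Y and (0,+∞) replacing ℝ) is homeomorphic to the closed unit ball in the tangent space at x₀; in particular H ∪_p S is an n-cell. -/
open Topology Set Metric

/-- The teardrop topology on `H ⊔ S` for a map `p` defined only on the open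
subset `H \ {x₀}` (the variation of the teardrop construction where `p` is
defined on an open subset): the minimal topology in which every open set of
`H` is open and the collapse map (defined on `(H \ {x₀}) ⊔ S`, sending
`x ↦ p x` and `s ↦ (s, +∞)`) is continuous. -/
def pointedTeardropTop {H S : Type*} [TopologicalSpace H] [TopologicalSpace S]
    (x₀ : H) (p : {x : H // x ≠ x₀} → S × ℝ) : TopologicalSpace (H ⊕ S) :=
  TopologicalSpace.generateFrom
    ({T | ∃ U : Set H, IsOpen U ∧ T = Sum.inl '' U} ∪
     {T | ∃ V : Set (S × EReal), IsOpen V ∧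
        T = {w : H ⊕ S | Sum.elim
              (fun x => ∃ hx : x ≠ x₀,
                ((p ⟨x, hx⟩).1, ((p ⟨x, hx⟩).2 : EReal)) ∈ V)
              (fun s => ((s, ⊤) : S × EReal) ∈ V) w}})

/-!
In the chart `expH` the point `x ≠ x₀` has polar coordinates `p x = (u, r)`, and the bijection onto
the closed unit ball sends `x` to `(r / (1 + r)) • u` and the boundary point `s` to `s`: it is
`(u, r) ↦ (r / (1 + r)) • u` applied to the collapse map, with `r = ⊤` allowed. As
`r ↦ r / (1 + r)` is an order isomorphism `[0, ⊤] ≃ [0, 1]`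
(`ENNReal.orderIsoUnitIntervalBirational`), this map is continuous, and so is its inverse (polar
coordinates with the radius stretched back to `[0, ⊤]`) away from the centre. Hence the sets
generating the teardrop topology are open in the ball and, together with the open sets of `H`,
they cover every open set of the ball.
-/

open scoped ENNReal

/-- `t / (1 - t)` on `[0, 1)` and `⊤` at `1`; the argument is clamped to `[0, 1]`. -/
noncomputable def radialStretch (t : ℝ) : EReal :=
  (ENNReal.orderIsoUnitIntervalBirational.symm (projIcc 0 1 zero_le_one t) : ℝ≥0∞)

/-- `r / (1 + r)` on `[0, ⊤]`, and `0` for negative `r`. -/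
noncomputable def radialCompress (r : EReal) : ℝ :=
  ENNReal.orderIsoUnitIntervalBirational r.toENNReal

theorem continuous_radialStretch : Continuous radialStretch :=
  continuous_coe_ennreal_ereal.comp
    (ENNReal.orderIsoUnitIntervalBirational.symm.toHomeomorph.continuous.comp continuous_projIcc)

theorem continuous_radialCompress : Continuous radialCompress :=
  continuous_subtype_val.comp
    (ENNReal.orderIsoUnitIntervalBirational.toHomeomorph.continuous.comp EReal.continuous_toENNReal)

theorem radialCompress_radialStretch {t : ℝ} (ht : t ∈ Icc (0 : ℝ) 1) :
    radialCompress (radialStretch t) = t := by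
  simp [radialCompress, radialStretch, EReal.toENNReal_coe, projIcc_of_mem _ ht]

theorem radialStretch_one : radialStretch 1 = ⊤ := by
  rw [radialStretch, projIcc_right, EReal.coe_ennreal_eq_top_iff, OrderIso.symm_apply_eq]
  ext
  simp

theorem orderIsoUnitIntervalBirational_ofReal {d : ℝ} (hd : 0 ≤ d) :
    (ENNReal.orderIsoUnitIntervalBirational (ENNReal.ofReal d) : ℝ) = d / (1 + d) := by
  rcases hd.eq_or_lt with rfl | hd
  · simp
  · rw [ENNReal.orderIsoUnitIntervalBirational_apply_coe, ← ENNReal.ofReal_inv_of_pos hd,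
      ← ENNReal.ofReal_one, ← ENNReal.ofReal_add (by positivity) zero_le_one,
      ← ENNReal.ofReal_inv_of_pos (by positivity), ENNReal.toReal_ofReal (by positivity)]
    field_simp

theorem radialStretch_div_one_add {d : ℝ} (hd : 0 ≤ d) : radialStretch (d / (1 + d)) = d := by
  have hmem : d / (1 + d) ∈ Icc (0 : ℝ) 1 :=
    ⟨by positivity, (div_le_one (by positivity)).2 (by linarith)⟩
  rw [radialStretch, projIcc_of_mem _ hmem]
  have : ENNReal.orderIsoUnitIntervalBirational (ENNReal.ofReal d) = ⟨d / (1 + d), hmem⟩ :=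
    Subtype.ext (orderIsoUnitIntervalBirational_ofReal hd)
  rw [← this, OrderIso.symm_apply_apply, EReal.coe_ennreal_ofReal, max_eq_left hd]

section
variable {X : Type*} [PseudoMetricSpace X] (x : X) (r : ℝ)

noncomputable def ballSumSphereEquiv : ball x r ⊕ sphere x r ≃ closedBall x r :=
  open Classical in
  (Equiv.Set.union sphere_disjoint_ball.symm).symm.trans (Equiv.setCongr ball_union_sphere)

theorem isOpenEmbedding_ballSumSphereEquiv_inl :
    IsOpenEmbedding (ballSumSphereEquiv x r ∘ Sum.inl) :=
  .inclusion ball_subset_closedBall (isOpen_ball.preimage continuous_subtype_val)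

end

section
variable {F : Type*} [NormedAddCommGroup F] [NormedSpace ℝ F]

theorem norm_inv_one_add_norm_smul (w : F) : ‖(1 + ‖w‖)⁻¹ • w‖ = ‖w‖ / (1 + ‖w‖) := by
  rw [norm_smul, norm_inv, Real.norm_of_nonneg (by positivity), inv_mul_eq_div]

noncomputable def radialShrink : F ≃ₜ ball (0 : F) 1 where
  toFun w := ⟨(1 + ‖w‖)⁻¹ • w, by
    rw [mem_ball_zero_iff, norm_inv_one_add_norm_smul, div_lt_one (by positivity)]
    exact lt_one_add _⟩
  invFun v := (1 - ‖(v : F)‖)⁻¹ • (v : F)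
  left_inv w := by
    have : 1 - ‖w‖ / (1 + ‖w‖) = (1 + ‖w‖)⁻¹ := by field_simp; ring
    simp only [norm_inv_one_add_norm_smul, this, inv_inv, smul_smul,
      mul_inv_cancel₀ (by positivity : 1 + ‖w‖ ≠ 0), one_smul]
  right_inv v := by
    have hv : ‖(v : F)‖ < 1 := mem_ball_zero_iff.1 v.2
    have h : 0 < 1 - ‖(v : F)‖ := sub_pos.2 hv
    ext
    simp only [norm_smul, norm_inv, Real.norm_of_nonneg h.le, smul_smul]
    rw [show (1 + (1 - ‖(v : F)‖)⁻¹ * ‖(v : F)‖)⁻¹ = 1 - ‖(v : F)‖ by field_simp; ring,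
      mul_inv_cancel₀ h.ne', one_smul]
  continuous_toFun := by
    refine Continuous.subtype_mk (Continuous.smul ?_ continuous_id) _
    exact (continuous_const.add continuous_norm).inv₀ fun w =>
      (by positivity : (0 : ℝ) < 1 + ‖w‖).ne'
  continuous_invFun := by
    refine Continuous.smul ?_ continuous_subtype_val
    refine (continuous_const.sub continuous_subtype_val.norm).inv₀ fun v => ?_
    exact (sub_pos.2 (mem_ball_zero_iff.1 v.2)).ne'

theorem coe_radialShrink (w : F) : (radialShrink w : F) = (1 + ‖w‖)⁻¹ • w := rfl

noncomputable def stretchedPolar (v : F) : F × EReal := (‖v‖⁻¹ • v, radialStretch ‖v‖)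

theorem continuousOn_stretchedPolar : ContinuousOn (stretchedPolar : F → F × EReal) {v | v ≠ 0} :=
  ((continuous_norm.continuousOn.inv₀ fun _ => norm_ne_zero_iff.2).smul continuousOn_id).prodMk
    (continuous_radialStretch.comp continuous_norm).continuousOn

theorem radialCompress_smul_stretchedPolar {v : F} (hv : ‖v‖ ≤ 1) :
    radialCompress (stretchedPolar v).2 • (stretchedPolar v).1 = v := by
  rcases eq_or_ne v 0 with rfl | hv0
  · simp [stretchedPolar]
  · rw [stretchedPolar, radialCompress_radialStretch ⟨norm_nonneg v, hv⟩,
      smul_inv_smul₀ (norm_ne_zero_iff.2 hv0)]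

theorem stretchedPolar_of_norm_eq_one {v : F} (hv : ‖v‖ = 1) : stretchedPolar v = (v, ⊤) := by
  rw [stretchedPolar, hv, inv_one, one_smul, radialStretch_one]

theorem stretchedPolar_radialShrink {w : F} (hw : w ≠ 0) :
    stretchedPolar (radialShrink w : F) = (‖w‖⁻¹ • w, (‖w‖ : EReal)) := by
  have hw' : ‖w‖ ≠ 0 := norm_ne_zero_iff.2 hw
  rw [stretchedPolar, coe_radialShrink, norm_inv_one_add_norm_smul,
    radialStretch_div_one_add (norm_nonneg w), smul_smul]
  congr 2
  field_simp

end

section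
variable {H S : Type*} [TopologicalSpace H] [TopologicalSpace S] {x₀ : H}
  {p : {x : H // x ≠ x₀} → S × ℝ}

theorem isOpen_pointedTeardropTop_inl_image {U : Set H} (hU : IsOpen U) :
    IsOpen[pointedTeardropTop x₀ p] (Sum.inl '' U) :=
  TopologicalSpace.isOpen_generateFrom_of_mem (.inl ⟨U, hU, rfl⟩)

theorem isOpen_pointedTeardropTop_collapse_preimage {V : Set (S × EReal)} (hV : IsOpen V) :
    IsOpen[pointedTeardropTop x₀ p] {w : H ⊕ S | Sum.elim
      (fun x => ∃ hx : x ≠ x₀, ((p ⟨x, hx⟩).1, ((p ⟨x, hx⟩).2 : EReal)) ∈ V)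
      (fun s => ((s, ⊤) : S × EReal) ∈ V) w} :=
  TopologicalSpace.isOpen_generateFrom_of_mem (.inr ⟨V, hV, rfl⟩)

end

theorem Homeomorph.symm_apply_ne_iff {X Y : Type*} [TopologicalSpace X] [TopologicalSpace Y]
    (e : X ≃ₜ Y) {a : X} {b : Y} (h : e a = b) {y : Y} : e.symm y ≠ a ↔ y ≠ b := by
  rw [Ne, e.symm_apply_eq, h]

section
variable {F : Type*} [NormedAddCommGroup F] [NormedSpace ℝ F] {H : Type*} [TopologicalSpace H]

noncomputable def teardropEquiv (expH : F ≃ₜ H) : H ⊕ sphere (0 : F) 1 ≃ closedBall (0 : F) 1 :=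
  (Equiv.sumCongr (expH.symm.trans radialShrink).toEquiv (Equiv.refl _)).trans
    (ballSumSphereEquiv 0 1)

variable (expH : F ≃ₜ H)

theorem coe_teardropEquiv_inl (x : H) :
    (teardropEquiv expH (.inl x) : F) = radialShrink (expH.symm x) := rfl

theorem coe_teardropEquiv_inr (s : sphere (0 : F) 1) :
    (teardropEquiv expH (.inr s) : F) = s := rfl

theorem isOpenEmbedding_teardropEquiv_inl : IsOpenEmbedding (teardropEquiv expH ∘ Sum.inl) :=
  (isOpenEmbedding_ballSumSphereEquiv_inl 0 1).comp (expH.symm.trans radialShrink).isOpenEmbedding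

variable {x₀ : H} {p : {x : H // x ≠ x₀} → sphere (0 : F) 1 × ℝ}

theorem teardropEquiv_inl_ne_zero_iff (hzero : expH 0 = x₀) {x : H} :
    (teardropEquiv expH (.inl x) : F) ≠ 0 ↔ x ≠ x₀ := by
  rw [coe_teardropEquiv_inl, coe_radialShrink, smul_ne_zero_iff_right
    (by positivity : (1 + ‖expH.symm x‖)⁻¹ ≠ 0), expH.symm_apply_ne_iff hzero]

theorem stretchedPolar_teardropEquiv_inl (hzero : expH 0 = x₀)
    (hp₁ : ∀ x : {x : H // x ≠ x₀}, ((p x).1 : F) = ‖expH.symm x.1‖⁻¹ • expH.symm x.1)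
    (hp₂ : ∀ x : {x : H // x ≠ x₀}, (p x).2 = ‖expH.symm x.1‖) {x : H} (hx : x ≠ x₀) :
    stretchedPolar (teardropEquiv expH (.inl x) : F) =
      (((p ⟨x, hx⟩).1 : F), ((p ⟨x, hx⟩).2 : EReal)) := by
  rw [coe_teardropEquiv_inl, stretchedPolar_radialShrink ((expH.symm_apply_ne_iff hzero).2 hx),
    hp₁, hp₂]

theorem collapse_preimage_eq_teardropEquiv_preimage (hzero : expH 0 = x₀)
    (hp₁ : ∀ x : {x : H // x ≠ x₀}, ((p x).1 : F) = ‖expH.symm x.1‖⁻¹ • expH.symm x.1)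
    (hp₂ : ∀ x : {x : H // x ≠ x₀}, (p x).2 = ‖expH.symm x.1‖) (W : Set (F × EReal)) :
    {w : H ⊕ sphere (0 : F) 1 | Sum.elim
      (fun x => ∃ hx : x ≠ x₀,
        ((p ⟨x, hx⟩).1, ((p ⟨x, hx⟩).2 : EReal)) ∈ Prod.map Subtype.val id ⁻¹' W)
      (fun s => ((s, ⊤) : sphere (0 : F) 1 × EReal) ∈ Prod.map Subtype.val id ⁻¹' W) w} =
      teardropEquiv expH ⁻¹' (Subtype.val ⁻¹' {v | v ≠ 0 ∧ stretchedPolar v ∈ W}) := by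
  ext (x | s)
  · simp only [mem_ofPred_eq, Sum.elim_inl, mem_preimage, Prod.map_apply, id_eq]
    constructor
    · rintro ⟨hx, hW⟩
      refine ⟨(teardropEquiv_inl_ne_zero_iff expH hzero).2 hx, ?_⟩
      rwa [stretchedPolar_teardropEquiv_inl expH hzero hp₁ hp₂ hx]
    · rintro ⟨h0, hW⟩
      have hx := (teardropEquiv_inl_ne_zero_iff expH hzero).1 h0
      exact ⟨hx, by rwa [stretchedPolar_teardropEquiv_inl expH hzero hp₁ hp₂ hx] at hW⟩
  · have hs : ‖(s : F)‖ = 1 := mem_sphere_zero_iff_norm.1 s.2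
    simp only [mem_ofPred_eq, Sum.elim_inr, mem_preimage, Prod.map_apply, id_eq,
      coe_teardropEquiv_inr, stretchedPolar_of_norm_eq_one hs, ← norm_pos_iff, hs, zero_lt_one,
      true_and]

theorem pointedTeardropTop_eq_induced (hzero : expH 0 = x₀)
    (hp₁ : ∀ x : {x : H // x ≠ x₀}, ((p x).1 : F) = ‖expH.symm x.1‖⁻¹ • expH.symm x.1)
    (hp₂ : ∀ x : {x : H // x ≠ x₀}, (p x).2 = ‖expH.symm x.1‖) :
    pointedTeardropTop x₀ p = TopologicalSpace.induced (teardropEquiv expH) inferInstance := by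
  have hcollapse := collapse_preimage_eq_teardropEquiv_preimage expH hzero hp₁ hp₂
  have hinl := isOpenEmbedding_teardropEquiv_inl expH
  apply le_antisymm
  · intro T hT
    obtain ⟨O, hO, rfl⟩ := isOpen_induced_iff.1 hT
    obtain ⟨O', hO', rfl⟩ := isOpen_induced_iff.1 hO
    -- `W` pulls `O'` back along the inverse of `stretchedPolar`
    set W : Set (F × EReal) := (fun q => radialCompress q.2 • q.1) ⁻¹' O'
    have hW : IsOpen W :=
      hO'.preimage ((continuous_radialCompress.comp continuous_snd).smul continuous_fst)
    have hWO' (v : closedBall (0 : F) 1) : stretchedPolar (v : F) ∈ W ↔ (v : F) ∈ O' := by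
      simp only [W, mem_preimage,
        radialCompress_smul_stretchedPolar (mem_closedBall_zero_iff.1 v.2)]
    have hsplit : teardropEquiv expH ⁻¹' (Subtype.val ⁻¹' O') =
        Sum.inl '' ((teardropEquiv expH ∘ Sum.inl) ⁻¹' (Subtype.val ⁻¹' O')) ∪
          teardropEquiv expH ⁻¹' (Subtype.val ⁻¹' {v | v ≠ 0 ∧ stretchedPolar v ∈ W}) := by
      ext (x | s)
      · simp [hWO']
      · have hs : teardropEquiv expH (.inr s) ≠ 0 := fun h =>
          ne_zero_of_mem_unit_sphere s (congrArg Subtype.val h)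
        simp [hWO', coe_teardropEquiv_inr, hs]
    rw [hsplit, ← hcollapse W]
    exact @IsOpen.union _ _ _ (pointedTeardropTop x₀ p)
      (isOpen_pointedTeardropTop_inl_image (p := p) (hO.preimage hinl.continuous))
      (isOpen_pointedTeardropTop_collapse_preimage (p := p)
        (hW.preimage (continuous_subtype_val.prodMap continuous_id)))
  · refine le_generateFrom ?_
    rintro T (⟨U, hU, rfl⟩ | ⟨V, hV, rfl⟩)
    · refine isOpen_induced_iff.2 ⟨_, hinl.isOpenMap U hU, ?_⟩
      rw [image_comp, Equiv.preimage_image]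
    · obtain ⟨W, hW, rfl⟩ := (IsInducing.subtypeVal.prodMap IsInducing.id).isOpen_iff.1 hV
      rw [hcollapse W]
      exact isOpen_induced <|
        (continuousOn_stretchedPolar.isOpen_inter_preimage isOpen_ne hW).preimage
          continuous_subtype_val

theorem continuous_of_eq_polar (hzero : expH 0 = x₀)
    (hp₁ : ∀ x : {x : H // x ≠ x₀}, ((p x).1 : F) = ‖expH.symm x.1‖⁻¹ • expH.symm x.1)
    (hp₂ : ∀ x : {x : H // x ≠ x₀}, (p x).2 = ‖expH.symm x.1‖) : Continuous p := by
  have hchart : Continuous fun x : {x : H // x ≠ x₀} => expH.symm x.1 :=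
    expH.continuous_symm.comp continuous_subtype_val
  have hdir : Continuous fun x => (p x).1 := by
    refine continuous_induced_rng.2 ?_
    simp only [Function.comp_def, hp₁]
    refine (hchart.norm.inv₀ fun x => ?_).smul hchart
    exact norm_ne_zero_iff.2 ((expH.symm_apply_ne_iff hzero).2 x.2)
  have hrad : Continuous fun x => (p x).2 := by
    simpa only [hp₂] using hchart.norm
  exact hdir.prodMk hrad

end

/-- Example 3.3 (Hadamard's teardrop): let `H` be an `n`-dimensional Hadamard
manifold with base point `x₀` and `S` the unit (tangent) sphere at `x₀`.  By
the Cartan–Hadamard theorem the exponential map at `x₀` is a homeomorphism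
`exp : ℝⁿ → H` with `d(x₀, exp v) = ‖v‖`.  The map
`p : H \ {x₀} → S × (0, +∞)`, `p(x) = (γ'_x(0), d(x₀, x))` — i.e. the pair
(unit radial direction of `x`, distance to `x₀`) — is continuous, and the
teardrop `H ∪_p S` is homeomorphic to the closed unit ball in the tangent
space; in particular it is an `n`-cell. -/
theorem hadamard_teardrop_is_cell
    {n : ℕ} {H : Type*} [MetricSpace H] (x₀ : H)
    (expH : EuclideanSpace ℝ (Fin n) ≃ₜ H)
    (hzero : expH 0 = x₀)
    (hdist : ∀ v : EuclideanSpace ℝ (Fin n), dist x₀ (expH v) = ‖v‖)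
    (p : {x : H // x ≠ x₀} →
      ↥(Metric.sphere (0 : EuclideanSpace ℝ (Fin n)) 1) × ℝ)
    (hp₁ : ∀ x : {x : H // x ≠ x₀},
      ((p x).1 : EuclideanSpace ℝ (Fin n)) =
        ‖expH.symm x.1‖⁻¹ • expH.symm x.1)
    (hp₂ : ∀ x : {x : H // x ≠ x₀}, (p x).2 = dist x₀ x.1) :
    Continuous p ∧
      Nonempty
        (@Homeomorph (H ⊕ ↥(Metric.sphere (0 : EuclideanSpace ℝ (Fin n)) 1))
          ↥(Metric.closedBall (0 : EuclideanSpace ℝ (Fin n)) 1)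
          (pointedTeardropTop x₀ p) _) := by
  have hp₂' (x : {x : H // x ≠ x₀}) : (p x).2 = ‖expH.symm x.1‖ := by
    rw [hp₂, ← hdist, expH.apply_symm_apply]
  have hinducing : @IsInducing _ _ (pointedTeardropTop x₀ p) _ (teardropEquiv expH) :=
    @IsInducing.mk _ _ (pointedTeardropTop x₀ p) _ _
      (pointedTeardropTop_eq_induced expH hzero hp₁ hp₂')
  exact ⟨continuous_of_eq_polar expH hzero hp₁ hp₂',
    ⟨@Equiv.toHomeomorphOfIsInducing _ _ (pointedTeardropTop x₀ p) _ _ hinducing⟩⟩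
end
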